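/- arXiv:1407.0492 — 5 statements merged into one kernel-verified Lean document; each statement's English description precedes it below -/
import Mathlib

section
/- If s : ℝ² × ℝ → ℝ³ is a smooth solution of the Schrödinger map equation ∂_t s = s × Δ s with |s(x,t)| = 1 and s₃ > -1 everywhere, then the stereographic projection u = (s₁ + i s₂)/(1 + s₃) solves the equation i ∂_t u + Δ u = (2 ū /(1 + |u|²)) Σ_{i=1}^{2} (∂_{x_i} u)². -/
open Complex

/-- Spatial partial derivative (complex-valued). -/
noncomputable def pd (i : Fin 2) (f : (Fin 2 → ℝ) → ℂ) (x : Fin 2 → ℝ) : ℂ :=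
  fderiv ℝ f x (Pi.single i 1)

/-- Spatial Laplacian (complex-valued). -/
noncomputable def lap (f : (Fin 2 → ℝ) → ℂ) (x : Fin 2 → ℝ) : ℂ :=
  ∑ i : Fin 2, pd i (fun y => pd i f y) x

/-- Spatial partial derivative (real-valued). -/
noncomputable def pdR (i : Fin 2) (f : (Fin 2 → ℝ) → ℝ) (x : Fin 2 → ℝ) : ℝ :=
  fderiv ℝ f x (Pi.single i 1)

/-- Spatial Laplacian (real-valued). -/
noncomputable def lapR (f : (Fin 2 → ℝ) → ℝ) (x : Fin 2 → ℝ) : ℝ :=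
  ∑ i : Fin 2, pdR i (fun y => pdR i f y) x

/-- Cross product in `ℝ³`. -/
def cross (a b : Fin 3 → ℝ) : Fin 3 → ℝ :=
  ![a 1 * b 2 - a 2 * b 1, a 2 * b 0 - a 0 * b 2, a 0 * b 1 - a 1 * b 0]


lemma hasDerivAt_line {E : Type*} [NormedAddCommGroup E] [NormedSpace ℝ E]
    {f : (Fin 2 → ℝ) → E} {x : Fin 2 → ℝ} (hf : DifferentiableAt ℝ f x) (v : Fin 2 → ℝ) :
    HasDerivAt (fun h : ℝ => f (x + h • v)) (fderiv ℝ f x v) 0 := by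
  have hline : HasDerivAt (fun h : ℝ => x + h • v) v 0 := by
    simpa using ((hasDerivAt_id (0:ℝ)).smul_const v).const_add x
  have h2 : HasFDerivAt f (fderiv ℝ f x) (x + (0:ℝ) • v) := by
    simpa using hf.hasFDerivAt
  exact h2.comp_hasDerivAt 0 hline

lemma pd_eq {f : (Fin 2 → ℝ) → ℂ} {x : Fin 2 → ℝ} (hf : DifferentiableAt ℝ f x) (i : Fin 2)
    {D : ℂ} (h : HasDerivAt (fun h : ℝ => f (x + h • (Pi.single i 1 : Fin 2 → ℝ))) D 0) :
    pd i f x = D :=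
  (hasDerivAt_line hf (Pi.single i 1)).unique h

lemma pdR_eq {f : (Fin 2 → ℝ) → ℝ} {x : Fin 2 → ℝ} (hf : DifferentiableAt ℝ f x) (i : Fin 2)
    {D : ℝ} (h : HasDerivAt (fun h : ℝ => f (x + h • (Pi.single i 1 : Fin 2 → ℝ))) D 0) :
    pdR i f x = D :=
  (hasDerivAt_line hf (Pi.single i 1)).unique h

lemma lineR {G : (Fin 2 → ℝ) → ℝ} {x : Fin 2 → ℝ} (hG : DifferentiableAt ℝ G x) (i : Fin 2) :
    HasDerivAt (fun h : ℝ => G (x + h • (Pi.single i 1 : Fin 2 → ℝ))) (pdR i G x) 0 :=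
  hasDerivAt_line hG (Pi.single i 1)

lemma diffAt_ofReal {g : (Fin 2 → ℝ) → ℝ} {x : Fin 2 → ℝ} (hg : DifferentiableAt ℝ g x) :
    DifferentiableAt ℝ (fun y => (g y : ℂ)) x := by
  simpa [Function.comp_def] using Complex.ofRealCLM.differentiableAt.comp x hg

lemma diffAt_div {f g : (Fin 2 → ℝ) → ℂ} {x : Fin 2 → ℝ} (hf : DifferentiableAt ℝ f x)
    (hg : DifferentiableAt ℝ g x) (h0 : g x ≠ 0) :
    DifferentiableAt ℝ (fun y => f y / g y) x := by
  simp only [div_eq_mul_inv]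
  exact hf.mul (hg.inv h0)

/-- first-derivative formula for the stereographic quotient -/
lemma pd_stereo {g0 g1 g2 : (Fin 2 → ℝ) → ℝ} {x : Fin 2 → ℝ}
    (h0 : DifferentiableAt ℝ g0 x) (h1 : DifferentiableAt ℝ g1 x) (h2 : DifferentiableAt ℝ g2 x)
    (hd : (1 : ℂ) + (g2 x : ℂ) ≠ 0) (i : Fin 2) :
    pd i (fun y => ((g0 y : ℂ) + Complex.I * (g1 y : ℂ)) / (1 + (g2 y : ℂ))) x
      = (((pdR i g0 x : ℂ) + Complex.I * (pdR i g1 x : ℂ)) * (1 + (g2 x : ℂ))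
          - ((g0 x : ℂ) + Complex.I * (g1 x : ℂ)) * (pdR i g2 x : ℂ)) / (1 + (g2 x : ℂ)) ^ 2 := by
  have hdiff : DifferentiableAt ℝ (fun y => ((g0 y : ℂ) + Complex.I * (g1 y : ℂ)) / (1 + (g2 y : ℂ))) x :=
    diffAt_div ((diffAt_ofReal h0).add ((diffAt_ofReal h1).const_mul _))
      ((diffAt_ofReal h2).const_add 1) hd
  have hnum : HasDerivAt (fun h : ℝ => ((g0 (x + h • (Pi.single i 1 : Fin 2 → ℝ)) : ℂ)
      + Complex.I * (g1 (x + h • (Pi.single i 1 : Fin 2 → ℝ)) : ℂ)))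
      ((pdR i g0 x : ℂ) + Complex.I * (pdR i g1 x : ℂ)) 0 :=
    ((lineR h0 i).ofReal_comp).add (((lineR h1 i).ofReal_comp).const_mul Complex.I)
  have hden : HasDerivAt (fun h : ℝ => (1 : ℂ) + (g2 (x + h • (Pi.single i 1 : Fin 2 → ℝ)) : ℂ))
      ((pdR i g2 x : ℂ)) 0 := ((lineR h2 i).ofReal_comp).const_add 1
  have hden0 : (1 : ℂ) + (g2 (x + (0:ℝ) • (Pi.single i 1 : Fin 2 → ℝ)) : ℂ) ≠ 0 := by simpa using hd
  have hq := hnum.div hden hden0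
  have := pd_eq hdiff i hq
  rw [this]
  simp only [zero_smul, add_zero]

/-- second-derivative formula: pd of the first-derivative formula -/
lemma pd_stereo2 {g0 g1 g2 p0 p1 p2 : (Fin 2 → ℝ) → ℝ} {x : Fin 2 → ℝ}
    (h0 : DifferentiableAt ℝ g0 x) (h1 : DifferentiableAt ℝ g1 x) (h2 : DifferentiableAt ℝ g2 x)
    (k0 : DifferentiableAt ℝ p0 x) (k1 : DifferentiableAt ℝ p1 x) (k2 : DifferentiableAt ℝ p2 x)
    (hd : (1 : ℂ) + (g2 x : ℂ) ≠ 0) (i : Fin 2) :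
    pd i (fun y => (((p0 y : ℂ) + Complex.I * (p1 y : ℂ)) * (1 + (g2 y : ℂ))
        - ((g0 y : ℂ) + Complex.I * (g1 y : ℂ)) * (p2 y : ℂ)) / (1 + (g2 y : ℂ)) ^ 2) x
      = ((((pdR i p0 x : ℂ) + Complex.I * (pdR i p1 x : ℂ)) * (1 + (g2 x : ℂ))
            + ((p0 x : ℂ) + Complex.I * (p1 x : ℂ)) * (pdR i g2 x : ℂ)
            - ((pdR i g0 x : ℂ) + Complex.I * (pdR i g1 x : ℂ)) * (p2 x : ℂ)
            - ((g0 x : ℂ) + Complex.I * (g1 x : ℂ)) * (pdR i p2 x : ℂ)) * (1 + (g2 x : ℂ))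
          - (((p0 x : ℂ) + Complex.I * (p1 x : ℂ)) * (1 + (g2 x : ℂ))
            - ((g0 x : ℂ) + Complex.I * (g1 x : ℂ)) * (p2 x : ℂ)) * (2 * (pdR i g2 x : ℂ)))
         / (1 + (g2 x : ℂ)) ^ 3 := by
  have hden : DifferentiableAt ℝ (fun y => (1 : ℂ) + (g2 y : ℂ)) x := (diffAt_ofReal h2).const_add 1
  have hnumd : DifferentiableAt ℝ (fun y => ((p0 y : ℂ) + Complex.I * (p1 y : ℂ)) * (1 + (g2 y : ℂ))
      - ((g0 y : ℂ) + Complex.I * (g1 y : ℂ)) * (p2 y : ℂ)) x :=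
    (((diffAt_ofReal k0).add ((diffAt_ofReal k1).const_mul _)).mul hden).sub
      (((diffAt_ofReal h0).add ((diffAt_ofReal h1).const_mul _)).mul (diffAt_ofReal k2))
  have hdiff : DifferentiableAt ℝ (fun y => (((p0 y : ℂ) + Complex.I * (p1 y : ℂ)) * (1 + (g2 y : ℂ))
      - ((g0 y : ℂ) + Complex.I * (g1 y : ℂ)) * (p2 y : ℂ)) / (1 + (g2 y : ℂ)) ^ 2) x :=
    diffAt_div hnumd (hden.pow 2) (pow_ne_zero 2 hd)
  set e : Fin 2 → ℝ := Pi.single i 1 with he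
  have hnum : HasDerivAt (fun h : ℝ => ((p0 (x + h • e) : ℂ) + Complex.I * (p1 (x + h • e) : ℂ))
        * (1 + (g2 (x + h • e) : ℂ))
      - ((g0 (x + h • e) : ℂ) + Complex.I * (g1 (x + h • e) : ℂ)) * (p2 (x + h • e) : ℂ))
      (((pdR i p0 x : ℂ) + Complex.I * (pdR i p1 x : ℂ)) * (1 + (g2 (x + (0:ℝ) • e) : ℂ))
        + ((p0 (x + (0:ℝ) • e) : ℂ) + Complex.I * (p1 (x + (0:ℝ) • e) : ℂ)) * (pdR i g2 x : ℂ)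
        - (((pdR i g0 x : ℂ) + Complex.I * (pdR i g1 x : ℂ)) * (p2 (x + (0:ℝ) • e) : ℂ)
          + ((g0 (x + (0:ℝ) • e) : ℂ) + Complex.I * (g1 (x + (0:ℝ) • e) : ℂ)) * (pdR i p2 x : ℂ))) 0 := by
    exact ((((lineR k0 i).ofReal_comp).add (((lineR k1 i).ofReal_comp).const_mul Complex.I)).mul
        (((lineR h2 i).ofReal_comp).const_add 1)).sub
      ((((lineR h0 i).ofReal_comp).add (((lineR h1 i).ofReal_comp).const_mul Complex.I)).mul
        ((lineR k2 i).ofReal_comp))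
  have hbase : HasDerivAt (fun h : ℝ => (1 : ℂ) + (g2 (x + h • e) : ℂ)) ((pdR i g2 x : ℂ)) 0 :=
    ((lineR h2 i).ofReal_comp).const_add 1
  have hdenh : HasDerivAt (fun h : ℝ => ((1 : ℂ) + (g2 (x + h • e) : ℂ)) ^ 2)
      ((pdR i g2 x : ℂ) * ((1 : ℂ) + (g2 (x + (0:ℝ) • e) : ℂ))
        + ((1 : ℂ) + (g2 (x + (0:ℝ) • e) : ℂ)) * (pdR i g2 x : ℂ)) 0 := by
    simpa [pow_two, Pi.mul_def] using hbase.mul hbase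
  have hden0 : ((1 : ℂ) + (g2 (x + (0:ℝ) • e) : ℂ)) ^ 2 ≠ 0 := by
    simpa using pow_ne_zero 2 hd
  have hq := hnum.div hdenh hden0
  have := pd_eq hdiff i hq
  rw [this]
  simp only [zero_smul, add_zero, pow_one]
  have hdx : (1 : ℂ) + (g2 x : ℂ) ≠ 0 := hd
  field_simp
  ring

/-- time derivative of the stereographic quotient -/
lemma deriv_stereo {g0 g1 g2 : ℝ → ℝ} {t : ℝ} {w0 w1 w2 : ℝ}
    (h0 : HasDerivAt g0 w0 t) (h1 : HasDerivAt g1 w1 t) (h2 : HasDerivAt g2 w2 t)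
    (hd : (1 : ℂ) + (g2 t : ℂ) ≠ 0) :
    deriv (fun τ => ((g0 τ : ℂ) + Complex.I * (g1 τ : ℂ)) / (1 + (g2 τ : ℂ))) t
      = (((w0 : ℂ) + Complex.I * (w1 : ℂ)) * (1 + (g2 t : ℂ))
          - ((g0 t : ℂ) + Complex.I * (g1 t : ℂ)) * (w2 : ℂ)) / (1 + (g2 t : ℂ)) ^ 2 := by
  have hnum : HasDerivAt (fun τ => ((g0 τ : ℂ) + Complex.I * (g1 τ : ℂ)))
      ((w0 : ℂ) + Complex.I * (w1 : ℂ)) t :=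
    (h0.ofReal_comp).add ((h1.ofReal_comp).const_mul Complex.I)
  have hden : HasDerivAt (fun τ => (1 : ℂ) + (g2 τ : ℂ)) ((w2 : ℂ)) t :=
    (h2.ofReal_comp).const_add 1
  have hq := hnum.div hden hd
  exact hq.deriv

/-- differentiating the unit-norm constraint -/
lemma pdR_constraint1 {g0 g1 g2 : (Fin 2 → ℝ) → ℝ} {x : Fin 2 → ℝ}
    (h0 : DifferentiableAt ℝ g0 x) (h1 : DifferentiableAt ℝ g1 x) (h2 : DifferentiableAt ℝ g2 x)
    (hconst : ∀ y, g0 y ^ 2 + g1 y ^ 2 + g2 y ^ 2 = 1) (i : Fin 2) :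
    g0 x * pdR i g0 x + g1 x * pdR i g1 x + g2 x * pdR i g2 x = 0 := by
  set e : Fin 2 → ℝ := Pi.single i 1 with he
  have hc : HasDerivAt (fun h : ℝ => g0 (x + h • e) ^ 2 + g1 (x + h • e) ^ 2 + g2 (x + h • e) ^ 2)
      ((pdR i g0 x * g0 (x + (0:ℝ) • e) + g0 (x + (0:ℝ) • e) * pdR i g0 x)
        + (pdR i g1 x * g1 (x + (0:ℝ) • e) + g1 (x + (0:ℝ) • e) * pdR i g1 x)
        + (pdR i g2 x * g2 (x + (0:ℝ) • e) + g2 (x + (0:ℝ) • e) * pdR i g2 x)) 0 := by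
    simpa [pow_two, Pi.mul_def, Pi.add_def] using
      (((lineR h0 i).mul (lineR h0 i)).add ((lineR h1 i).mul (lineR h1 i))).add
        ((lineR h2 i).mul (lineR h2 i))
  have hc2 : HasDerivAt (fun _ : ℝ => (1:ℝ)) (0:ℝ) 0 := hasDerivAt_const 0 1
  have hfun : (fun h : ℝ => g0 (x + h • e) ^ 2 + g1 (x + h • e) ^ 2 + g2 (x + h • e) ^ 2)
      = fun _ : ℝ => (1:ℝ) := funext fun h => hconst _
  rw [hfun] at hc
  have := hc.unique hc2
  simp only [zero_smul, add_zero] at this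
  nlinarith [this]

/-- differentiating the first-order constraint again -/
lemma pdR_constraint2 {g0 g1 g2 p0 p1 p2 : (Fin 2 → ℝ) → ℝ} {x : Fin 2 → ℝ}
    (h0 : DifferentiableAt ℝ g0 x) (h1 : DifferentiableAt ℝ g1 x) (h2 : DifferentiableAt ℝ g2 x)
    (k0 : DifferentiableAt ℝ p0 x) (k1 : DifferentiableAt ℝ p1 x) (k2 : DifferentiableAt ℝ p2 x)
    (hzero : ∀ y, g0 y * p0 y + g1 y * p1 y + g2 y * p2 y = 0) (i : Fin 2) :
    pdR i g0 x * p0 x + g0 x * pdR i p0 x + pdR i g1 x * p1 x + g1 x * pdR i p1 x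
      + pdR i g2 x * p2 x + g2 x * pdR i p2 x = 0 := by
  set e : Fin 2 → ℝ := Pi.single i 1 with he
  have hc : HasDerivAt (fun h : ℝ => g0 (x + h • e) * p0 (x + h • e)
        + g1 (x + h • e) * p1 (x + h • e) + g2 (x + h • e) * p2 (x + h • e))
      ((pdR i g0 x * p0 (x + (0:ℝ) • e) + g0 (x + (0:ℝ) • e) * pdR i p0 x)
        + (pdR i g1 x * p1 (x + (0:ℝ) • e) + g1 (x + (0:ℝ) • e) * pdR i p1 x)
        + (pdR i g2 x * p2 (x + (0:ℝ) • e) + g2 (x + (0:ℝ) • e) * pdR i p2 x)) 0 := by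
    exact (((lineR h0 i).mul (lineR k0 i)).add ((lineR h1 i).mul (lineR k1 i))).add
      ((lineR h2 i).mul (lineR k2 i))
  have hc2 : HasDerivAt (fun _ : ℝ => (0:ℝ)) (0:ℝ) 0 := hasDerivAt_const 0 0
  have hfun : (fun h : ℝ => g0 (x + h • e) * p0 (x + h • e)
        + g1 (x + h • e) * p1 (x + h • e) + g2 (x + h • e) * p2 (x + h • e))
      = fun _ : ℝ => (0:ℝ) := funext fun h => hzero _
  rw [hfun] at hc
  have := hc.unique hc2
  simp only [zero_smul, add_zero] at this
  linarith [this]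

lemma key_algebra (a b c a1 b1 c1 a2 b2 c2 qa1 qb1 qc1 qa2 qb2 qc2 : ℂ)
    (hC0 : a^2 + b^2 + c^2 = 1)
    (hC1 : a*a1 + b*b1 + c*c1 = 0) (hC2 : a*a2 + b*b2 + c*c2 = 0)
    (hE1 : a1*a1 + a*qa1 + b1*b1 + b*qb1 + c1*c1 + c*qc1 = 0)
    (hE2 : a2*a2 + a*qa2 + b2*b2 + b*qb2 + c2*c2 + c*qc2 = 0)
    (hd : (1:ℂ) + c ≠ 0) :
    Complex.I * (((b*(qc1+qc2) - c*(qb1+qb2)) + Complex.I * (c*(qa1+qa2) - a*(qc1+qc2)))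
          * (1 + c) - (a + Complex.I*b) * (a*(qb1+qb2) - b*(qa1+qa2))) / (1+c)^2
      + ((((qa1 + Complex.I*qb1)*(1+c) - (a+Complex.I*b)*qc1) * (1+c)
          - ((a1+Complex.I*b1)*(1+c) - (a+Complex.I*b)*c1) * (2*c1)) / (1+c)^3
        + (((qa2 + Complex.I*qb2)*(1+c) - (a+Complex.I*b)*qc2) * (1+c)
          - ((a2+Complex.I*b2)*(1+c) - (a+Complex.I*b)*c2) * (2*c2)) / (1+c)^3)
      = (a - Complex.I*b) * ((((a1+Complex.I*b1)*(1+c) - (a+Complex.I*b)*c1) / (1+c)^2)^2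
          + (((a2+Complex.I*b2)*(1+c) - (a+Complex.I*b)*c2) / (1+c)^2)^2) := by
  have key0 :
      Complex.I * (((b*(qc1+qc2) - c*(qb1+qb2)) + Complex.I * (c*(qa1+qa2) - a*(qc1+qc2)))
          * (1+c) - (a+Complex.I*b) * (a*(qb1+qb2) - b*(qa1+qa2))) * (1+c)^2
        + ((((qa1 + Complex.I*qb1)*(1+c) - (a+Complex.I*b)*qc1) * (1+c)
            - ((a1+Complex.I*b1)*(1+c) - (a+Complex.I*b)*c1) * (2*c1))
          + (((qa2 + Complex.I*qb2)*(1+c) - (a+Complex.I*b)*qc2) * (1+c)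
            - ((a2+Complex.I*b2)*(1+c) - (a+Complex.I*b)*c2) * (2*c2))) * (1+c)
      = (a - Complex.I*b) * ((((a1+Complex.I*b1)*(1+c) - (a+Complex.I*b)*c1))^2
          + (((a2+Complex.I*b2)*(1+c) - (a+Complex.I*b)*c2))^2) := by
    linear_combination ((1)*a + (2)*a*c + (1)*a*c^2 + (1)*Complex.I*b + (2)*Complex.I*b*c + (1)*Complex.I*b*c^2) * hE1 + ((1)*a + (2)*a*c + (1)*a*c^2 + (1)*Complex.I*b + (2)*Complex.I*b*c + (1)*Complex.I*b*c^2) * hE2 + ((-2)*a1 + (-4)*c*a1 + (-2)*c^2*a1 + (-2)*Complex.I*b1 + (-4)*Complex.I*c*b1 + (-2)*Complex.I*c^2*b1) * hC1 + ((-2)*a2 + (-4)*c*a2 + (-2)*c^2*a2 + (-2)*Complex.I*b2 + (-4)*Complex.I*c*b2 + (-2)*Complex.I*c^2*b2) * hC2 + ((-1)*qa2 + (-1)*qa1 + (2)*a2*c2 + (2)*a1*c1 + (-2)*c*qa2 + (-2)*c*qa1 + (2)*c*a2*c2 + (2)*c*a1*c1 + (-1)*c^2*qa2 + (-1)*c^2*qa1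 + (-1)*a*c2^2 + (-1)*a*c1^2 + (-1)*Complex.I*qb2 + (-1)*Complex.I*qb1 + (2)*Complex.I*b2*c2 + (2)*Complex.I*b1*c1 + (-2)*Complex.I*c*qb2 + (-2)*Complex.I*c*qb1 + (2)*Complex.I*c*b2*c2 + (2)*Complex.I*c*b1*c1 + (-1)*Complex.I*c^2*qb2 + (-1)*Complex.I*c^2*qb1 + (-1)*Complex.I*b*c2^2 + (-1)*Complex.I*b*c1^2) * hC0 + ((1)*c*qa2 + (1)*c*qa1 + (3)*c^2*qa2 + (3)*c^2*qa1 + (3)*c^3*qa2 + (3)*c^3*qa1 + (1)*c^4*qa2 + (1)*c^4*qa1 + (2)*b*a2*b2 + (2)*b*a1*b1 + (4)*b*c*a2*b2 + (4)*b*c*a1*b1 + (2)*b*c^2*a2*b2 + (2)*b*c^2*a1*b1 + (1)*b^2*qa2 + (1)*b^2*qa1 + (-2)*b^2*a2*c2 + (-2)*b^2*a1*c1 + (2)*b^2*c*qa2 + (2)*b^2*c*qa1 + (-2)*b^2*c*a2*c2 + (-2)*b^2*c*a1*c1 + (1)*b^2*c^2*qa2 + (1)*b^2*c^2*qa1 +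 (-1)*a*qc2 + (-1)*a*qc1 + (-1)*a*b2^2 + (-1)*a*b1^2 + (-3)*a*c*qc2 + (-3)*a*c*qc1 + (-2)*a*c*b2^2 + (-2)*a*c*b1^2 + (-3)*a*c^2*qc2 + (-3)*a*c^2*qc1 + (-1)*a*c^2*b2^2 + (-1)*a*c^2*b1^2 + (-1)*a*c^3*qc2 + (-1)*a*c^3*qc1 + (-1)*a*b*qb2 + (-1)*a*b*qb1 + (-2)*a*b*c*qb2 + (-2)*a*b*c*qb1 + (-1)*a*b*c^2*qb2 + (-1)*a*b*c^2*qb1 + (1)*a*b^2*c2^2 + (1)*a*b^2*c1^2 + (1)*Complex.I*b*b2^2 + (1)*Complex.I*b*b1^2 + (2)*Complex.I*b*c*b2^2 + (2)*Complex.I*b*c*b1^2 + (1)*Complex.I*b*c^2*b2^2 + (1)*Complex.I*b*c^2*b1^2 + (-2)*Complex.I*b^2*b2*c2 + (-2)*Complex.I*b^2*b1*c1 + (-2)*Complex.I*b^2*c*b2*c2 + (-2)*Complex.I*b^2*c*b1*c1 + (1)*Complex.I*b^3*c2^2 + (1)*Complex.I*b^3*c1^2) * Complex.I_sq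
  have e1 : Complex.I * (((b*(qc1+qc2) - c*(qb1+qb2)) + Complex.I * (c*(qa1+qa2) - a*(qc1+qc2)))
          * (1+c) - (a+Complex.I*b) * (a*(qb1+qb2) - b*(qa1+qa2))) / (1+c)^2
      + ((((qa1 + Complex.I*qb1)*(1+c) - (a+Complex.I*b)*qc1) * (1+c)
          - ((a1+Complex.I*b1)*(1+c) - (a+Complex.I*b)*c1) * (2*c1)) / (1+c)^3
        + (((qa2 + Complex.I*qb2)*(1+c) - (a+Complex.I*b)*qc2) * (1+c)
          - ((a2+Complex.I*b2)*(1+c) - (a+Complex.I*b)*c2) * (2*c2)) / (1+c)^3)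
      = (Complex.I * (((b*(qc1+qc2) - c*(qb1+qb2)) + Complex.I * (c*(qa1+qa2) - a*(qc1+qc2)))
          * (1+c) - (a+Complex.I*b) * (a*(qb1+qb2) - b*(qa1+qa2))) * (1+c)^2
        + ((((qa1 + Complex.I*qb1)*(1+c) - (a+Complex.I*b)*qc1) * (1+c)
            - ((a1+Complex.I*b1)*(1+c) - (a+Complex.I*b)*c1) * (2*c1))
          + (((qa2 + Complex.I*qb2)*(1+c) - (a+Complex.I*b)*qc2) * (1+c)
            - ((a2+Complex.I*b2)*(1+c) - (a+Complex.I*b)*c2) * (2*c2))) * (1+c)) / (1+c)^4 := by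
    field_simp
  have e2 : (a - Complex.I*b) * ((((a1+Complex.I*b1)*(1+c) - (a+Complex.I*b)*c1) / (1+c)^2)^2
          + (((a2+Complex.I*b2)*(1+c) - (a+Complex.I*b)*c2) / (1+c)^2)^2)
      = (a - Complex.I*b) * ((((a1+Complex.I*b1)*(1+c) - (a+Complex.I*b)*c1))^2
          + (((a2+Complex.I*b2)*(1+c) - (a+Complex.I*b)*c2))^2) / (1+c)^4 := by
    rw [div_pow, div_pow, ← add_div, ← pow_mul, mul_div_assoc]
  rw [e1, e2, key0]

lemma stereo_conj (a b c : ℝ) (hC0 : a^2 + b^2 + c^2 = 1) (hc : -1 < c) :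
    2 * (starRingEnd ℂ) (((a:ℂ) + Complex.I*(b:ℂ))/(1+(c:ℂ)))
        / (1 + (Complex.normSq (((a:ℂ) + Complex.I*(b:ℂ))/(1+(c:ℂ))) : ℂ))
      = (a:ℂ) - Complex.I*(b:ℂ) := by
  have h1 : (1:ℝ) + c ≠ 0 := by linarith
  have h1' : (1:ℂ) + (c:ℂ) ≠ 0 := by
    have : ((1+c:ℝ):ℂ) ≠ 0 := by exact_mod_cast h1
    push_cast at this
    exact this
  have hns : Complex.normSq (((a:ℂ) + Complex.I*(b:ℂ))/(1+(c:ℂ))) = (a^2+b^2)/(1+c)^2 := by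
    rw [Complex.normSq_div]
    congr 1
    · simp [Complex.normSq_apply]
      ring
    · simp [Complex.normSq_apply]
      ring
  rw [hns]
  have hab : a^2 + b^2 = (1-c)*(1+c) := by nlinarith [hC0]
  rw [hab]
  have hfrac : ((1-c)*(1+c)/(1+c)^2 : ℝ) = (1-c)/(1+c) := by
    field_simp
  rw [hfrac]
  have hconj : (starRingEnd ℂ) (((a:ℂ) + Complex.I*(b:ℂ))/(1+(c:ℂ)))
      = ((a:ℂ) - Complex.I*(b:ℂ))/(1+(c:ℂ)) := by
    simp [map_div₀]
    ring
  rw [hconj]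
  have hden2 : (1:ℂ) + (((1-c)/(1+c) : ℝ) : ℂ) = 2/(1+(c:ℂ)) := by
    push_cast
    field_simp
    norm_num
  rw [hden2]
  field_simp

set_option maxHeartbeats 2000000 in
/-- If `s` is a smooth solution of the Schrödinger map equation `∂_t s = s × Δ s` with
`|s| ≡ 1` and `s₃ > -1`, then the stereographic projection `u = (s₁ + i s₂)/(1 + s₃)` solves
`i ∂_t u + Δ u = (2 ū/(1+|u|²)) Σᵢ (∂_{xᵢ} u)²`. -/
theorem schroedinger_map_stereographic (s : (Fin 2 → ℝ) → ℝ → (Fin 3 → ℝ))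
    (hs : ContDiff ℝ 2 (fun p : (Fin 2 → ℝ) × ℝ => s p.1 p.2))
    (hunit : ∀ x t, ∑ i : Fin 3, (s x t i) ^ 2 = 1)
    (hs3 : ∀ x t, s x t 2 > -1)
    (hmap : ∀ x t i, deriv (fun τ => s x τ i) t
      = cross (s x t) (fun j => lapR (fun y => s y t j) x) i)
    (u : (Fin 2 → ℝ) → ℝ → ℂ)
    (hu : ∀ x t, u x t = ((s x t 0 : ℂ) + Complex.I * (s x t 1 : ℂ)) / (1 + (s x t 2 : ℂ))) :
    ∀ x t, Complex.I * deriv (fun τ => u x τ) t + lap (fun y => u y t) x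
      = 2 * (starRingEnd ℂ) (u x t) / (1 + (Complex.normSq (u x t) : ℂ))
          * ∑ i : Fin 2, (pd i (fun y => u y t) x) ^ 2 := by
  intro x t
  have hden : ∀ (y : Fin 2 → ℝ) (τ : ℝ), (1:ℂ) + (s y τ 2 : ℂ) ≠ 0 := by
    intro y τ
    have h : (1:ℝ) + s y τ 2 ≠ 0 := by linarith [hs3 y τ]
    have h2 : ((1 + s y τ 2 : ℝ) : ℂ) ≠ 0 := by exact_mod_cast h
    push_cast at h2
    exact h2
  have hgc : ∀ (j : Fin 3), ContDiff ℝ 2 (fun y => s y t j) := by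
    intro j
    have h1 : ContDiff ℝ 2 (fun p : (Fin 2 → ℝ) × ℝ => s p.1 p.2 j) := by
      have := (ContinuousLinearMap.proj (R := ℝ) (φ := fun _ : Fin 3 => ℝ) j).contDiff.comp hs
      simpa [Function.comp_def] using this
    have h2 : ContDiff ℝ 2 (fun y : Fin 2 → ℝ => ((y, t) : (Fin 2 → ℝ) × ℝ)) :=
      contDiff_id.prodMk contDiff_const
    exact h1.comp h2
  have hgt : ∀ (j : Fin 3), ContDiff ℝ 2 (fun τ => s x τ j) := by
    intro j
    have h1 : ContDiff ℝ 2 (fun p : (Fin 2 → ℝ) × ℝ => s p.1 p.2 j) := by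
      have := (ContinuousLinearMap.proj (R := ℝ) (φ := fun _ : Fin 3 => ℝ) j).contDiff.comp hs
      simpa [Function.comp_def] using this
    have h2 : ContDiff ℝ 2 (fun τ : ℝ => ((x, τ) : (Fin 2 → ℝ) × ℝ)) :=
      contDiff_const.prodMk contDiff_id
    exact h1.comp h2
  have hgd : ∀ (j : Fin 3) (y : Fin 2 → ℝ), DifferentiableAt ℝ (fun y' => s y' t j) y :=
    fun j y => ((hgc j).differentiable (by norm_num)).differentiableAt
  have hpdc : ∀ (i : Fin 2) (j : Fin 3), ContDiff ℝ 1 (fun y => pdR i (fun y' => s y' t j) y) := by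
    intro i j
    have h1 : ContDiff ℝ 1 (fderiv ℝ (fun y' => s y' t j)) :=
      (hgc j).fderiv_right (by norm_num)
    have h2 := (ContinuousLinearMap.apply ℝ ℝ ((Pi.single i 1 : Fin 2 → ℝ))).contDiff.comp h1
    simpa [pdR, Function.comp_def, ContinuousLinearMap.apply_apply] using h2
  have hpdd : ∀ (i : Fin 2) (j : Fin 3) (y : Fin 2 → ℝ),
      DifferentiableAt ℝ (fun y' => pdR i (fun y'' => s y'' t j) y') y :=
    fun i j y => ((hpdc i j).differentiable (by norm_num)).differentiableAt
  have hufun : (fun y => u y t)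
      = fun y => ((s y t 0 : ℂ) + Complex.I * (s y t 1 : ℂ)) / (1 + (s y t 2 : ℂ)) :=
    funext fun y => hu y t
  have hpdu : ∀ (i : Fin 2) (y : Fin 2 → ℝ), pd i (fun y' => u y' t) y
      = (((pdR i (fun y' => s y' t 0) y : ℂ)
            + Complex.I * (pdR i (fun y' => s y' t 1) y : ℂ)) * (1 + (s y t 2 : ℂ))
          - ((s y t 0 : ℂ) + Complex.I * (s y t 1 : ℂ))
            * (pdR i (fun y' => s y' t 2) y : ℂ)) / (1 + (s y t 2 : ℂ)) ^ 2 := by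
    intro i y
    rw [hufun]
    exact pd_stereo (hgd 0 y) (hgd 1 y) (hgd 2 y) (hden y t) i
  have hfe : ∀ i : Fin 2, (fun y => pd i (fun y' => u y' t) y)
      = fun y => (((pdR i (fun y' => s y' t 0) y : ℂ)
            + Complex.I * (pdR i (fun y' => s y' t 1) y : ℂ)) * (1 + (s y t 2 : ℂ))
          - ((s y t 0 : ℂ) + Complex.I * (s y t 1 : ℂ))
            * (pdR i (fun y' => s y' t 2) y : ℂ)) / (1 + (s y t 2 : ℂ)) ^ 2 :=
    fun i => funext (hpdu i)
  have hw : ∀ j : Fin 3, HasDerivAt (fun τ => s x τ j) (deriv (fun τ => s x τ j) t) t :=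
    fun j => (((hgt j).differentiable (by norm_num)).differentiableAt).hasDerivAt
  have hutfun : (fun τ => u x τ)
      = fun τ => ((s x τ 0 : ℂ) + Complex.I * (s x τ 1 : ℂ)) / (1 + (s x τ 2 : ℂ)) :=
    funext fun τ => hu x τ
  have hut : deriv (fun τ => u x τ) t
      = ((Complex.ofReal (deriv (fun τ => s x τ 0) t)
            + Complex.I * Complex.ofReal (deriv (fun τ => s x τ 1) t)) * (1 + (s x t 2 : ℂ))
          - ((s x t 0 : ℂ) + Complex.I * (s x t 1 : ℂ))
            * Complex.ofReal (deriv (fun τ => s x τ 2) t)) / (1 + (s x t 2 : ℂ)) ^ 2 := by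
    rw [hutfun]
    exact deriv_stereo (hw 0) (hw 1) (hw 2) (hden x t)
  have hLexp : ∀ j : Fin 3, lapR (fun y => s y t j) x
      = pdR 0 (fun y => pdR 0 (fun y' => s y' t j) y) x
        + pdR 1 (fun y => pdR 1 (fun y' => s y' t j) y) x := by
    intro j
    simp [lapR, Fin.sum_univ_two]
  have hm0 : deriv (fun τ => s x τ 0) t
      = s x t 1 * lapR (fun y => s y t 2) x - s x t 2 * lapR (fun y => s y t 1) x := by
    rw [hmap x t 0]
    simp [cross]
  have hm1 : deriv (fun τ => s x τ 1) t
      = s x t 2 * lapR (fun y => s y t 0) x - s x t 0 * lapR (fun y => s y t 2) x := by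
    rw [hmap x t 1]
    simp [cross]
  have hm2 : deriv (fun τ => s x τ 2) t
      = s x t 0 * lapR (fun y => s y t 1) x - s x t 1 * lapR (fun y => s y t 0) x := by
    rw [hmap x t 2]
    simp [cross]
  have hsum : ∀ y : Fin 2 → ℝ,
      (fun y' => s y' t 0) y ^ 2 + (fun y' => s y' t 1) y ^ 2 + (fun y' => s y' t 2) y ^ 2 = 1 := by
    intro y
    have := hunit y t
    simpa [Fin.sum_univ_three] using this
  have hCx : ∀ (i : Fin 2) (y : Fin 2 → ℝ),
      s y t 0 * pdR i (fun y' => s y' t 0) y + s y t 1 * pdR i (fun y' => s y' t 1) y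
        + s y t 2 * pdR i (fun y' => s y' t 2) y = 0 :=
    fun i y => pdR_constraint1 (hgd 0 y) (hgd 1 y) (hgd 2 y) hsum i
  have hEx : ∀ i : Fin 2,
      pdR i (fun y' => s y' t 0) x * pdR i (fun y' => s y' t 0) x
        + s x t 0 * pdR i (fun y => pdR i (fun y' => s y' t 0) y) x
        + pdR i (fun y' => s y' t 1) x * pdR i (fun y' => s y' t 1) x
        + s x t 1 * pdR i (fun y => pdR i (fun y' => s y' t 1) y) x
        + pdR i (fun y' => s y' t 2) x * pdR i (fun y' => s y' t 2) x
        + s x t 2 * pdR i (fun y => pdR i (fun y' => s y' t 2) y) x = 0 :=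
    fun i => pdR_constraint2 (hgd 0 x) (hgd 1 x) (hgd 2 x)
      (hpdd i 0 x) (hpdd i 1 x) (hpdd i 2 x) (fun y => hCx i y) i
  have hC0 : s x t 0 ^ 2 + s x t 1 ^ 2 + s x t 2 ^ 2 = 1 := hsum x
  have hconjpiece : 2 * (starRingEnd ℂ) (u x t) / (1 + (Complex.normSq (u x t) : ℂ))
      = (s x t 0 : ℂ) - Complex.I * (s x t 1 : ℂ) := by
    rw [hu x t]
    exact stereo_conj _ _ _ hC0 (hs3 x t)
  have hC0' : (s x t 0 : ℂ)^2 + (s x t 1 : ℂ)^2 + (s x t 2 : ℂ)^2 = 1 := by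
    exact_mod_cast hC0
  have hC1' : (s x t 0 : ℂ) * (pdR 0 (fun y' => s y' t 0) x : ℂ)
      + (s x t 1 : ℂ) * (pdR 0 (fun y' => s y' t 1) x : ℂ)
      + (s x t 2 : ℂ) * (pdR 0 (fun y' => s y' t 2) x : ℂ) = 0 := by
    exact_mod_cast hCx 0 x
  have hC2' : (s x t 0 : ℂ) * (pdR 1 (fun y' => s y' t 0) x : ℂ)
      + (s x t 1 : ℂ) * (pdR 1 (fun y' => s y' t 1) x : ℂ)
      + (s x t 2 : ℂ) * (pdR 1 (fun y' => s y' t 2) x : ℂ) = 0 := by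
    exact_mod_cast hCx 1 x
  have hE1' : (pdR 0 (fun y' => s y' t 0) x : ℂ) * (pdR 0 (fun y' => s y' t 0) x : ℂ)
      + (s x t 0 : ℂ) * (pdR 0 (fun y => pdR 0 (fun y' => s y' t 0) y) x : ℂ)
      + (pdR 0 (fun y' => s y' t 1) x : ℂ) * (pdR 0 (fun y' => s y' t 1) x : ℂ)
      + (s x t 1 : ℂ) * (pdR 0 (fun y => pdR 0 (fun y' => s y' t 1) y) x : ℂ)
      + (pdR 0 (fun y' => s y' t 2) x : ℂ) * (pdR 0 (fun y' => s y' t 2) x : ℂ)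
      + (s x t 2 : ℂ) * (pdR 0 (fun y => pdR 0 (fun y' => s y' t 2) y) x : ℂ) = 0 := by
    exact_mod_cast hEx 0
  have hE2' : (pdR 1 (fun y' => s y' t 0) x : ℂ) * (pdR 1 (fun y' => s y' t 0) x : ℂ)
      + (s x t 0 : ℂ) * (pdR 1 (fun y => pdR 1 (fun y' => s y' t 0) y) x : ℂ)
      + (pdR 1 (fun y' => s y' t 1) x : ℂ) * (pdR 1 (fun y' => s y' t 1) x : ℂ)
      + (s x t 1 : ℂ) * (pdR 1 (fun y => pdR 1 (fun y' => s y' t 1) y) x : ℂ)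
      + (pdR 1 (fun y' => s y' t 2) x : ℂ) * (pdR 1 (fun y' => s y' t 2) x : ℂ)
      + (s x t 2 : ℂ) * (pdR 1 (fun y => pdR 1 (fun y' => s y' t 2) y) x : ℂ) = 0 := by
    exact_mod_cast hEx 1
  have hkey := key_algebra (s x t 0 : ℂ) (s x t 1 : ℂ) (s x t 2 : ℂ)
      (pdR 0 (fun y' => s y' t 0) x : ℂ) (pdR 0 (fun y' => s y' t 1) x : ℂ)
      (pdR 0 (fun y' => s y' t 2) x : ℂ)
      (pdR 1 (fun y' => s y' t 0) x : ℂ) (pdR 1 (fun y' => s y' t 1) x : ℂ)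
      (pdR 1 (fun y' => s y' t 2) x : ℂ)
      (pdR 0 (fun y => pdR 0 (fun y' => s y' t 0) y) x : ℂ)
      (pdR 0 (fun y => pdR 0 (fun y' => s y' t 1) y) x : ℂ)
      (pdR 0 (fun y => pdR 0 (fun y' => s y' t 2) y) x : ℂ)
      (pdR 1 (fun y => pdR 1 (fun y' => s y' t 0) y) x : ℂ)
      (pdR 1 (fun y => pdR 1 (fun y' => s y' t 1) y) x : ℂ)
      (pdR 1 (fun y => pdR 1 (fun y' => s y' t 2) y) x : ℂ)
      hC0' hC1' hC2' hE1' hE2' (hden x t)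
  simp only [lap, Fin.sum_univ_two]
  rw [hfe 0, hfe 1,
    pd_stereo2 (hgd 0 x) (hgd 1 x) (hgd 2 x) (hpdd 0 0 x) (hpdd 0 1 x) (hpdd 0 2 x) (hden x t) 0,
    pd_stereo2 (hgd 0 x) (hgd 1 x) (hgd 2 x) (hpdd 1 0 x) (hpdd 1 1 x) (hpdd 1 2 x) (hden x t) 1,
    hut, hm0, hm1, hm2, hLexp 0, hLexp 1, hLexp 2, hconjpiece, hpdu 0 x, hpdu 1 x]
  push_cast
  push_cast at hkey
  linear_combination hkey
end

section
/- Conversely, if u : ℝ² × ℝ → ℂ is a smooth solution of i ∂_t u + Δ u = (2 ū/(1+|u|²)) Σ_{i=1}^{2} (∂_{x_i} u)², then s = (2 Re u/(1+|u|²), 2 Im u/(1+|u|²), (1-|u|²)/(1+|u|²)) satisfies |s| ≡ 1 and solves ∂_t s = s × Δ s. -/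
open Complex

namespace SMaux

lemma line_hasDerivAt (y v : Fin 2 → ℝ) (r : ℝ) :
    HasDerivAt (fun s : ℝ => y + s • v) v r := by
  simpa using ((hasDerivAt_id r).smul_const v).const_add y

lemma hasDerivAt_line {f : (Fin 2 → ℝ) → ℝ} {y : Fin 2 → ℝ} (hf : DifferentiableAt ℝ f y)
    (i : Fin 2) :
    HasDerivAt (fun r : ℝ => f (y + r • (Pi.single i 1 : Fin 2 → ℝ))) (pdR i f y) 0 := by
  have hf' : HasFDerivAt f (fderiv ℝ f y) (y + (0:ℝ) • (Pi.single i 1 : Fin 2 → ℝ)) := by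
    simpa using hf.hasFDerivAt
  exact hf'.comp_hasDerivAt 0 (line_hasDerivAt y (Pi.single i 1) 0)

lemma pdR_eq_deriv_line {f : (Fin 2 → ℝ) → ℝ} {y : Fin 2 → ℝ}
    {i : Fin 2} {v : ℝ} (hf : DifferentiableAt ℝ f y)
    (h : HasDerivAt (fun r : ℝ => f (y + r • (Pi.single i 1 : Fin 2 → ℝ))) v 0) :
    pdR i f y = v :=
  (hasDerivAt_line hf i).unique h

lemma pd_re {f : (Fin 2 → ℝ) → ℂ} {y : Fin 2 → ℝ} (hf : DifferentiableAt ℝ f y) (i : Fin 2) :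
    (pd i f y).re = pdR i (fun z => (f z).re) y := by
  have h : (fun z => (f z).re) = (reCLM ∘ f) := rfl
  rw [pdR, h, fderiv_comp y (ContinuousLinearMap.differentiableAt _) hf]
  simp [pd]

lemma pd_im {f : (Fin 2 → ℝ) → ℂ} {y : Fin 2 → ℝ} (hf : DifferentiableAt ℝ f y) (i : Fin 2) :
    (pd i f y).im = pdR i (fun z => (f z).im) y := by
  have h : (fun z => (f z).im) = (imCLM ∘ f) := rfl
  rw [pdR, h, fderiv_comp y (ContinuousLinearMap.differentiableAt _) hf]
  simp [pd]

lemma deriv_re' {f : ℝ → ℂ} {t : ℝ} (hf : DifferentiableAt ℝ f t) :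
    deriv (fun τ => (f τ).re) t = (deriv f t).re :=
  (reCLM.hasFDerivAt.comp_hasDerivAt t hf.hasDerivAt).deriv

lemma deriv_im' {f : ℝ → ℂ} {t : ℝ} (hf : DifferentiableAt ℝ f t) :
    deriv (fun τ => (f τ).im) t = (deriv f t).im :=
  (imCLM.hasFDerivAt.comp_hasDerivAt t hf.hasDerivAt).deriv

lemma diff_pdR {f : (Fin 2 → ℝ) → ℝ} (hf : ContDiff ℝ 2 f) (i : Fin 2) :
    Differentiable ℝ (fun y => pdR i f y) := by
  have h1 : Differentiable ℝ (fderiv ℝ f) :=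
    (hf.fderiv_right (m := 1) (by norm_num)).differentiable (by norm_num)
  exact h1.clm_apply (differentiable_const _)

lemma diff_pd {f : (Fin 2 → ℝ) → ℂ} (hf : ContDiff ℝ 2 f) (i : Fin 2) :
    Differentiable ℝ (fun y => pd i f y) := by
  have h1 : Differentiable ℝ (fderiv ℝ f) :=
    (hf.fderiv_right (m := 1) (by norm_num)).differentiable (by norm_num)
  exact h1.clm_apply (differentiable_const _)

variable {c d e f : (Fin 2 → ℝ) → ℝ}

lemma inner0 (hc : Differentiable ℝ c) (hd : Differentiable ℝ d) (i : Fin 2) (y : Fin 2 → ℝ) :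
    pdR i (fun z => 2 * c z / (1 + (c z ^ 2 + d z ^ 2))) y
      = (2 * pdR i c y * (1 + (c y ^ 2 + d y ^ 2))
          - 2 * c y * (2 * (c y * pdR i c y) + 2 * (d y * pdR i d y)))
          / (1 + (c y ^ 2 + d y ^ 2)) ^ 2 := by
  have hpos : (0:ℝ) < 1 + (c y ^ 2 + d y ^ 2) := by positivity
  have hden : DifferentiableAt ℝ (fun z => 1 + (c z ^ 2 + d z ^ 2)) y :=
    ((((hc y).pow 2).add ((hd y).pow 2)).const_add 1)
  have hdiff : DifferentiableAt ℝ (fun z => 2 * c z / (1 + (c z ^ 2 + d z ^ 2))) y := by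
    simp only [div_eq_mul_inv]
    exact ((hc y).const_mul 2).mul (hden.inv hpos.ne')
  refine pdR_eq_deriv_line hdiff ?_
  have h1 := hasDerivAt_line (hc y) i
  have h2 := hasDerivAt_line (hd y) i
  have h := (h1.const_mul 2).div ((((h1.pow 2).add (h2.pow 2)).const_add 1))
    (by simpa using hpos.ne')
  refine h.congr_deriv ?_
  simp
  ring

lemma inner1 (hc : Differentiable ℝ c) (hd : Differentiable ℝ d) (i : Fin 2) (y : Fin 2 → ℝ) :
    pdR i (fun z => 2 * d z / (1 + (c z ^ 2 + d z ^ 2))) y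
      = (2 * pdR i d y * (1 + (c y ^ 2 + d y ^ 2))
          - 2 * d y * (2 * (c y * pdR i c y) + 2 * (d y * pdR i d y)))
          / (1 + (c y ^ 2 + d y ^ 2)) ^ 2 := by
  have hpos : (0:ℝ) < 1 + (c y ^ 2 + d y ^ 2) := by positivity
  have hden : DifferentiableAt ℝ (fun z => 1 + (c z ^ 2 + d z ^ 2)) y :=
    ((((hc y).pow 2).add ((hd y).pow 2)).const_add 1)
  have hdiff : DifferentiableAt ℝ (fun z => 2 * d z / (1 + (c z ^ 2 + d z ^ 2))) y := by
    simp only [div_eq_mul_inv]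
    exact ((hd y).const_mul 2).mul (hden.inv hpos.ne')
  refine pdR_eq_deriv_line hdiff ?_
  have h1 := hasDerivAt_line (hc y) i
  have h2 := hasDerivAt_line (hd y) i
  have h := (h2.const_mul 2).div ((((h1.pow 2).add (h2.pow 2)).const_add 1))
    (by simpa using hpos.ne')
  refine h.congr_deriv ?_
  simp
  ring

lemma inner2 (hc : Differentiable ℝ c) (hd : Differentiable ℝ d) (i : Fin 2) (y : Fin 2 → ℝ) :
    pdR i (fun z => (1 - (c z ^ 2 + d z ^ 2)) / (1 + (c z ^ 2 + d z ^ 2))) y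
      = ((0 - (2 * (c y * pdR i c y) + 2 * (d y * pdR i d y))) * (1 + (c y ^ 2 + d y ^ 2))
          - (1 - (c y ^ 2 + d y ^ 2)) * (2 * (c y * pdR i c y) + 2 * (d y * pdR i d y)))
          / (1 + (c y ^ 2 + d y ^ 2)) ^ 2 := by
  have hpos : (0:ℝ) < 1 + (c y ^ 2 + d y ^ 2) := by positivity
  have hden : DifferentiableAt ℝ (fun z => 1 + (c z ^ 2 + d z ^ 2)) y :=
    ((((hc y).pow 2).add ((hd y).pow 2)).const_add 1)
  have hnum : DifferentiableAt ℝ (fun z => 1 - (c z ^ 2 + d z ^ 2)) y :=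
    ((((hc y).pow 2).add ((hd y).pow 2)).const_sub 1)
  have hdiff : DifferentiableAt ℝ
      (fun z => (1 - (c z ^ 2 + d z ^ 2)) / (1 + (c z ^ 2 + d z ^ 2))) y := by
    simp only [div_eq_mul_inv]
    exact hnum.mul (hden.inv hpos.ne')
  refine pdR_eq_deriv_line hdiff ?_
  have h1 := hasDerivAt_line (hc y) i
  have h2 := hasDerivAt_line (hd y) i
  have h := (((h1.pow 2).add (h2.pow 2)).const_sub 1).div
    ((((h1.pow 2).add (h2.pow 2)).const_add 1)) (by simpa using hpos.ne')
  refine h.congr_deriv ?_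
  simp
  ring

lemma outer0 (hc : Differentiable ℝ c) (hd : Differentiable ℝ d)
    (he : Differentiable ℝ e) (hf : Differentiable ℝ f) (i : Fin 2) (x : Fin 2 → ℝ) :
    pdR i (fun z => (2 * e z * (1 + (c z ^ 2 + d z ^ 2))
        - 2 * c z * (2 * (c z * e z) + 2 * (d z * f z))) / (1 + (c z ^ 2 + d z ^ 2)) ^ 2) x
    = ((2 * pdR i e x * (1 + (c x ^ 2 + d x ^ 2))
          + 2 * e x * (2 * (c x * pdR i c x) + 2 * (d x * pdR i d x))
        - (2 * pdR i c x * (2 * (c x * e x) + 2 * (d x * f x))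
          + 2 * c x * (2 * (pdR i c x * e x + c x * pdR i e x)
              + 2 * (pdR i d x * f x + d x * pdR i f x))))
        * (1 + (c x ^ 2 + d x ^ 2)) ^ 2
      - (2 * e x * (1 + (c x ^ 2 + d x ^ 2)) - 2 * c x * (2 * (c x * e x) + 2 * (d x * f x)))
        * (2 * (1 + (c x ^ 2 + d x ^ 2)) * (2 * (c x * pdR i c x) + 2 * (d x * pdR i d x))))
      / ((1 + (c x ^ 2 + d x ^ 2)) ^ 2) ^ 2 := by
  have hpos : (0:ℝ) < 1 + (c x ^ 2 + d x ^ 2) := by positivity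
  have hMd : DifferentiableAt ℝ (fun z => 1 + (c z ^ 2 + d z ^ 2)) x :=
    ((((hc x).pow 2).add ((hd x).pow 2)).const_add 1)
  have hWd : DifferentiableAt ℝ (fun z => 2 * (c z * e z) + 2 * (d z * f z)) x :=
    (((hc x).mul (he x)).const_mul 2).add (((hd x).mul (hf x)).const_mul 2)
  have hdiff : DifferentiableAt ℝ (fun z => (2 * e z * (1 + (c z ^ 2 + d z ^ 2))
      - 2 * c z * (2 * (c z * e z) + 2 * (d z * f z))) / (1 + (c z ^ 2 + d z ^ 2)) ^ 2) x := by
    simp only [div_eq_mul_inv]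
    exact ((((he x).const_mul 2).mul hMd).sub (((hc x).const_mul 2).mul hWd)).mul
      ((hMd.pow 2).inv (pow_ne_zero 2 hpos.ne'))
  refine pdR_eq_deriv_line hdiff ?_
  have h1 := hasDerivAt_line (hc x) i
  have h2 := hasDerivAt_line (hd x) i
  have h3 := hasDerivAt_line (he x) i
  have h4 := hasDerivAt_line (hf x) i
  have hM := ((h1.pow 2).add (h2.pow 2)).const_add 1
  have hW := ((h1.mul h3).const_mul 2).add ((h2.mul h4).const_mul 2)
  have h := (((h3.const_mul 2).mul hM).sub ((h1.const_mul 2).mul hW)).div (hM.pow 2)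
    (by simp; positivity)
  refine h.congr_deriv ?_
  simp
  ring

lemma outer1 (hc : Differentiable ℝ c) (hd : Differentiable ℝ d)
    (he : Differentiable ℝ e) (hf : Differentiable ℝ f) (i : Fin 2) (x : Fin 2 → ℝ) :
    pdR i (fun z => (2 * f z * (1 + (c z ^ 2 + d z ^ 2))
        - 2 * d z * (2 * (c z * e z) + 2 * (d z * f z))) / (1 + (c z ^ 2 + d z ^ 2)) ^ 2) x
    = ((2 * pdR i f x * (1 + (c x ^ 2 + d x ^ 2))
          + 2 * f x * (2 * (c x * pdR i c x) + 2 * (d x * pdR i d x))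
        - (2 * pdR i d x * (2 * (c x * e x) + 2 * (d x * f x))
          + 2 * d x * (2 * (pdR i c x * e x + c x * pdR i e x)
              + 2 * (pdR i d x * f x + d x * pdR i f x))))
        * (1 + (c x ^ 2 + d x ^ 2)) ^ 2
      - (2 * f x * (1 + (c x ^ 2 + d x ^ 2)) - 2 * d x * (2 * (c x * e x) + 2 * (d x * f x)))
        * (2 * (1 + (c x ^ 2 + d x ^ 2)) * (2 * (c x * pdR i c x) + 2 * (d x * pdR i d x))))
      / ((1 + (c x ^ 2 + d x ^ 2)) ^ 2) ^ 2 := by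
  have hpos : (0:ℝ) < 1 + (c x ^ 2 + d x ^ 2) := by positivity
  have hMd : DifferentiableAt ℝ (fun z => 1 + (c z ^ 2 + d z ^ 2)) x :=
    ((((hc x).pow 2).add ((hd x).pow 2)).const_add 1)
  have hWd : DifferentiableAt ℝ (fun z => 2 * (c z * e z) + 2 * (d z * f z)) x :=
    (((hc x).mul (he x)).const_mul 2).add (((hd x).mul (hf x)).const_mul 2)
  have hdiff : DifferentiableAt ℝ (fun z => (2 * f z * (1 + (c z ^ 2 + d z ^ 2))
      - 2 * d z * (2 * (c z * e z) + 2 * (d z * f z))) / (1 + (c z ^ 2 + d z ^ 2)) ^ 2) x := by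
    simp only [div_eq_mul_inv]
    exact ((((hf x).const_mul 2).mul hMd).sub (((hd x).const_mul 2).mul hWd)).mul
      ((hMd.pow 2).inv (pow_ne_zero 2 hpos.ne'))
  refine pdR_eq_deriv_line hdiff ?_
  have h1 := hasDerivAt_line (hc x) i
  have h2 := hasDerivAt_line (hd x) i
  have h3 := hasDerivAt_line (he x) i
  have h4 := hasDerivAt_line (hf x) i
  have hM := ((h1.pow 2).add (h2.pow 2)).const_add 1
  have hW := ((h1.mul h3).const_mul 2).add ((h2.mul h4).const_mul 2)
  have h := (((h4.const_mul 2).mul hM).sub ((h2.const_mul 2).mul hW)).div (hM.pow 2)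
    (by simp; positivity)
  refine h.congr_deriv ?_
  simp
  ring

lemma outer2 (hc : Differentiable ℝ c) (hd : Differentiable ℝ d)
    (he : Differentiable ℝ e) (hf : Differentiable ℝ f) (i : Fin 2) (x : Fin 2 → ℝ) :
    pdR i (fun z => ((0 - (2 * (c z * e z) + 2 * (d z * f z))) * (1 + (c z ^ 2 + d z ^ 2))
        - (1 - (c z ^ 2 + d z ^ 2)) * (2 * (c z * e z) + 2 * (d z * f z)))
        / (1 + (c z ^ 2 + d z ^ 2)) ^ 2) x
    = (((0 - (2 * (pdR i c x * e x + c x * pdR i e x)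
            + 2 * (pdR i d x * f x + d x * pdR i f x))) * (1 + (c x ^ 2 + d x ^ 2))
          + (0 - (2 * (c x * e x) + 2 * (d x * f x)))
            * (2 * (c x * pdR i c x) + 2 * (d x * pdR i d x))
        - ((0 - (2 * (c x * pdR i c x) + 2 * (d x * pdR i d x)))
              * (2 * (c x * e x) + 2 * (d x * f x))
          + (1 - (c x ^ 2 + d x ^ 2)) * (2 * (pdR i c x * e x + c x * pdR i e x)
              + 2 * (pdR i d x * f x + d x * pdR i f x))))
        * (1 + (c x ^ 2 + d x ^ 2)) ^ 2
      - ((0 - (2 * (c x * e x) + 2 * (d x * f x))) * (1 + (c x ^ 2 + d x ^ 2))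
          - (1 - (c x ^ 2 + d x ^ 2)) * (2 * (c x * e x) + 2 * (d x * f x)))
        * (2 * (1 + (c x ^ 2 + d x ^ 2)) * (2 * (c x * pdR i c x) + 2 * (d x * pdR i d x))))
      / ((1 + (c x ^ 2 + d x ^ 2)) ^ 2) ^ 2 := by
  have hpos : (0:ℝ) < 1 + (c x ^ 2 + d x ^ 2) := by positivity
  have hMd : DifferentiableAt ℝ (fun z => 1 + (c z ^ 2 + d z ^ 2)) x :=
    ((((hc x).pow 2).add ((hd x).pow 2)).const_add 1)
  have hnd : DifferentiableAt ℝ (fun z => 1 - (c z ^ 2 + d z ^ 2)) x :=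
    ((((hc x).pow 2).add ((hd x).pow 2)).const_sub 1)
  have hWd : DifferentiableAt ℝ (fun z => 2 * (c z * e z) + 2 * (d z * f z)) x :=
    (((hc x).mul (he x)).const_mul 2).add (((hd x).mul (hf x)).const_mul 2)
  have hdiff : DifferentiableAt ℝ
      (fun z => ((0 - (2 * (c z * e z) + 2 * (d z * f z))) * (1 + (c z ^ 2 + d z ^ 2))
        - (1 - (c z ^ 2 + d z ^ 2)) * (2 * (c z * e z) + 2 * (d z * f z)))
        / (1 + (c z ^ 2 + d z ^ 2)) ^ 2) x := by
    simp only [div_eq_mul_inv]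
    exact (((hWd.const_sub 0).mul hMd).sub (hnd.mul hWd)).mul
      ((hMd.pow 2).inv (pow_ne_zero 2 hpos.ne'))
  refine pdR_eq_deriv_line hdiff ?_
  have h1 := hasDerivAt_line (hc x) i
  have h2 := hasDerivAt_line (hd x) i
  have h3 := hasDerivAt_line (he x) i
  have h4 := hasDerivAt_line (hf x) i
  have hM := ((h1.pow 2).add (h2.pow 2)).const_add 1
  have hW := ((h1.mul h3).const_mul 2).add ((h2.mul h4).const_mul 2)
  have hn := ((h1.pow 2).add (h2.pow 2)).const_sub 1
  have h := (((hW.const_sub 0).mul hM).sub (hn.mul hW)).div (hM.pow 2)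
    (by simp; positivity)
  refine h.congr_deriv ?_
  simp
  ring

lemma time0 {a b : ℝ → ℝ} {t : ℝ} (ha : DifferentiableAt ℝ a t) (hb : DifferentiableAt ℝ b t) :
    deriv (fun τ => 2 * a τ / (1 + (a τ ^ 2 + b τ ^ 2))) t
    = (2 * deriv a t * (1 + (a t ^ 2 + b t ^ 2))
        - 2 * a t * (2 * (a t * deriv a t) + 2 * (b t * deriv b t)))
        / (1 + (a t ^ 2 + b t ^ 2)) ^ 2 := by
  have hpos : (0:ℝ) < 1 + (a t ^ 2 + b t ^ 2) := by positivity
  have h := (ha.hasDerivAt.const_mul 2).div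
    (((ha.hasDerivAt.pow 2).add (hb.hasDerivAt.pow 2)).const_add 1) hpos.ne'
  refine h.deriv.trans ?_
  simp
  ring

lemma time1 {a b : ℝ → ℝ} {t : ℝ} (ha : DifferentiableAt ℝ a t) (hb : DifferentiableAt ℝ b t) :
    deriv (fun τ => 2 * b τ / (1 + (a τ ^ 2 + b τ ^ 2))) t
    = (2 * deriv b t * (1 + (a t ^ 2 + b t ^ 2))
        - 2 * b t * (2 * (a t * deriv a t) + 2 * (b t * deriv b t)))
        / (1 + (a t ^ 2 + b t ^ 2)) ^ 2 := by
  have hpos : (0:ℝ) < 1 + (a t ^ 2 + b t ^ 2) := by positivity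
  have h := (hb.hasDerivAt.const_mul 2).div
    (((ha.hasDerivAt.pow 2).add (hb.hasDerivAt.pow 2)).const_add 1) hpos.ne'
  refine h.deriv.trans ?_
  simp
  ring

lemma time2 {a b : ℝ → ℝ} {t : ℝ} (ha : DifferentiableAt ℝ a t) (hb : DifferentiableAt ℝ b t) :
    deriv (fun τ => (1 - (a τ ^ 2 + b τ ^ 2)) / (1 + (a τ ^ 2 + b τ ^ 2))) t
    = ((0 - (2 * (a t * deriv a t) + 2 * (b t * deriv b t))) * (1 + (a t ^ 2 + b t ^ 2))
        - (1 - (a t ^ 2 + b t ^ 2)) * (2 * (a t * deriv a t) + 2 * (b t * deriv b t)))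
        / (1 + (a t ^ 2 + b t ^ 2)) ^ 2 := by
  have hpos : (0:ℝ) < 1 + (a t ^ 2 + b t ^ 2) := by positivity
  have h := (((ha.hasDerivAt.pow 2).add (hb.hasDerivAt.pow 2)).const_sub 1).div
    (((ha.hasDerivAt.pow 2).add (hb.hasDerivAt.pow 2)).const_add 1) hpos.ne'
  refine h.deriv.trans ?_
  simp
  ring

end SMaux
set_option maxHeartbeats 4000000 in
open SMaux in
/-- If `u` is a smooth solution of `i ∂_t u + Δ u = (2 ū/(1+|u|²)) Σᵢ (∂_{xᵢ} u)²`, then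
`s = (2 Re u, 2 Im u, 1 - |u|²)/(1+|u|²)` satisfies `|s| ≡ 1` and solves `∂_t s = s × Δ s`. -/
theorem inverse_stereographic_schroedinger_map (u : (Fin 2 → ℝ) → ℝ → ℂ)
    (hu : ContDiff ℝ 2 (fun p : (Fin 2 → ℝ) × ℝ => u p.1 p.2))
    (heq : ∀ x t, Complex.I * deriv (fun τ => u x τ) t + lap (fun y => u y t) x
      = 2 * (starRingEnd ℂ) (u x t) / (1 + (Complex.normSq (u x t) : ℂ))
          * ∑ i : Fin 2, (pd i (fun y => u y t) x) ^ 2)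
    (s : (Fin 2 → ℝ) → ℝ → (Fin 3 → ℝ))
    (hs : ∀ x t, s x t =
      ![2 * (u x t).re / (1 + Complex.normSq (u x t)),
        2 * (u x t).im / (1 + Complex.normSq (u x t)),
        (1 - Complex.normSq (u x t)) / (1 + Complex.normSq (u x t))]) :
    (∀ x t, ∑ i : Fin 3, (s x t i) ^ 2 = 1) ∧
    (∀ x t i, deriv (fun τ => s x τ i) t
      = cross (s x t) (fun j => lapR (fun y => s y t j) x) i) := by
  constructor
  · intro x t
    have h1 : (0:ℝ) < 1 + Complex.normSq (u x t) := by
      have := Complex.normSq_nonneg (u x t); linarith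
    rw [hs, Fin.sum_univ_three]
    simp only [Matrix.cons_val_zero, Matrix.cons_val_one, Matrix.head_cons,
      Matrix.cons_val_two, Matrix.tail_cons]
    rw [Complex.normSq_apply] at h1 ⊢
    field_simp
    ring
  · intro x t i
    -- basic smoothness
    have hut : ContDiff ℝ 2 (fun y => u y t) := hu.comp (contDiff_id.prodMk contDiff_const)
    have hux : ContDiff ℝ 2 (fun τ => u x τ) := hu.comp (contDiff_const.prodMk contDiff_id)
    have hutD : Differentiable ℝ (fun y => u y t) := hut.differentiable (by norm_num)
    have huxD : Differentiable ℝ (fun τ => u x τ) := hux.differentiable (by norm_num)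
    have hc2 : ContDiff ℝ 2 (fun y => (u y t).re) := Complex.reCLM.contDiff.comp hut
    have hd2 : ContDiff ℝ 2 (fun y => (u y t).im) := Complex.imCLM.contDiff.comp hut
    have hcD : Differentiable ℝ (fun y => (u y t).re) := hc2.differentiable (by norm_num)
    have hdD : Differentiable ℝ (fun y => (u y t).im) := hd2.differentiable (by norm_num)
    have haD : Differentiable ℝ (fun τ => (u x τ).re) :=
      (Complex.reCLM.contDiff.comp hux).differentiable (by norm_num)
    have hbD : Differentiable ℝ (fun τ => (u x τ).im) :=
      (Complex.imCLM.contDiff.comp hux).differentiable (by norm_num)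
    -- time derivative of u in coordinates
    have hderu : deriv (fun τ => u x τ) t
        = ((deriv (fun τ => (u x τ).re) t : ℝ) : ℂ)
          + ((deriv (fun τ => (u x τ).im) t : ℝ) : ℂ) * Complex.I := by
      apply Complex.ext
      · simp only [Complex.add_re, Complex.ofReal_re, Complex.mul_re, Complex.I_re,
          Complex.I_im, Complex.ofReal_im, mul_zero, mul_one, zero_sub, mul_comm]
        rw [deriv_re' (huxD t)]
        ring
      · simp only [Complex.add_im, Complex.ofReal_im, Complex.mul_im, Complex.I_re,
          Complex.I_im, Complex.ofReal_re, mul_zero, mul_one, zero_add, zero_mul, add_zero]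
        rw [deriv_im' (huxD t)]
    -- spatial derivatives of u in coordinates
    have hpdC : ∀ (i : Fin 2) (y : Fin 2 → ℝ), pd i (fun z => u z t) y
        = ((pdR i (fun z => (u z t).re) y : ℝ) : ℂ)
          + ((pdR i (fun z => (u z t).im) y : ℝ) : ℂ) * Complex.I := by
      intro i y
      apply Complex.ext
      · rw [pd_re (hutD y) i]
        simp
      · rw [pd_im (hutD y) i]
        simp
    -- laplacian of u in coordinates
    have hre2 : ∀ i : Fin 2, (fun y => (pd i (fun z => u z t) y).re)
        = fun y => pdR i (fun z => (u z t).re) y := by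
      intro i; funext y; rw [pd_re (hutD y) i]
    have him2 : ∀ i : Fin 2, (fun y => (pd i (fun z => u z t) y).im)
        = fun y => pdR i (fun z => (u z t).im) y := by
      intro i; funext y; rw [pd_im (hutD y) i]
    have hlapu : lap (fun z => u z t) x
        = ((pdR 0 (fun y => pdR 0 (fun z => (u z t).re) y) x
            + pdR 1 (fun y => pdR 1 (fun z => (u z t).re) y) x : ℝ) : ℂ)
          + ((pdR 0 (fun y => pdR 0 (fun z => (u z t).im) y) x
            + pdR 1 (fun y => pdR 1 (fun z => (u z t).im) y) x : ℝ) : ℂ) * Complex.I := by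
      have hpd2 : ∀ i : Fin 2, pd i (fun y => pd i (fun z => u z t) y) x
          = ((pdR i (fun y => pdR i (fun z => (u z t).re) y) x : ℝ) : ℂ)
            + ((pdR i (fun y => pdR i (fun z => (u z t).im) y) x : ℝ) : ℂ) * Complex.I := by
        intro i
        apply Complex.ext
        · rw [pd_re ((diff_pd hut i) x) i, hre2 i]
          simp
        · rw [pd_im ((diff_pd hut i) x) i, him2 i]
          simp
      rw [lap, Fin.sum_univ_two, hpd2 0, hpd2 1]
      push_cast
      ring
    -- extract the real and imaginary parts of the PDE
    have hmne : ((1:ℂ) + (Complex.normSq (u x t) : ℂ)) ≠ 0 := by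
      rw [show ((1:ℂ) + (Complex.normSq (u x t) : ℂ))
          = ((1 + Complex.normSq (u x t) : ℝ) : ℂ) by push_cast; ring]
      have h1 : (0:ℝ) < 1 + Complex.normSq (u x t) := by
        have := Complex.normSq_nonneg (u x t); linarith
      exact_mod_cast h1.ne'
    have key := heq x t
    rw [hderu, hlapu, Fin.sum_univ_two, hpdC 0 x, hpdC 1 x,
      div_mul_eq_mul_div, eq_div_iff hmne] at key
    have hre := congrArg Complex.re key
    have him := congrArg Complex.im key
    simp only [pow_two, Complex.add_re, Complex.add_im, Complex.mul_re, Complex.mul_im,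
      Complex.I_re, Complex.I_im, Complex.ofReal_re, Complex.ofReal_im, Complex.conj_re,
      Complex.conj_im, Complex.normSq_apply, Complex.re_ofNat, Complex.im_ofNat,
      Complex.one_re, Complex.one_im, mul_zero, mul_one, zero_mul, sub_zero, zero_sub,
      neg_neg, zero_add, add_zero, neg_zero, neg_mul, mul_neg] at hre him
    clear key
    have hMne : (1:ℝ) + ((u x t).re ^ 2 + (u x t).im ^ 2) ≠ 0 := by positivity
    have hpt : deriv (fun τ => (u x τ).re) t
        = (2 * (2 * (u x t).re * (pdR 0 (fun z => (u z t).re) x * pdR 0 (fun z => (u z t).im) x + pdR 1 (fun z => (u z t).re) x * pdR 1 (fun z => (u z t).im) x) - (u x t).im * (pdR 0 (fun z => (u z t).re) x ^ 2 - pdR 0 (fun z => (u z t).im) x ^ 2 + pdR 1 (fun z => (u z t).re) x ^ 2 - pdR 1 (fun z => (u z t).im) x ^ 2)) - (1 + ((u x t).re ^ 2 + (u x t).im ^ 2)) * (pdR 0 (fun y => pdR 0 (fun z => (u z t).im) y) x + pdR 1 (fun y => pdR 1 (fun z => (u z t).im) y) x)) / (1 + ((u x t).re ^ 2 + (u x t).im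 ^ 2)) := by
      rw [eq_div_iff hMne]
      linear_combination him
    have hqt : deriv (fun τ => (u x τ).im) t
        = ((1 + ((u x t).re ^ 2 + (u x t).im ^ 2)) * (pdR 0 (fun y => pdR 0 (fun z => (u z t).re) y) x + pdR 1 (fun y => pdR 1 (fun z => (u z t).re) y) x) - 2 * ((u x t).re * (pdR 0 (fun z => (u z t).re) x ^ 2 - pdR 0 (fun z => (u z t).im) x ^ 2 + pdR 1 (fun z => (u z t).re) x ^ 2 - pdR 1 (fun z => (u z t).im) x ^ 2) + 2 * (u x t).im * (pdR 0 (fun z => (u z t).re) x * pdR 0 (fun z => (u z t).im) x + pdR 1 (fun z => (u z t).re) x * pdR 1 (fun z => (u z t).im) x))) / (1 + ((u x t).re ^ 2 + (u x t).im ^ 2)) := by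
      rw [eq_div_iff hMne]
      linear_combination -hre
    clear hre him
    -- pointwise description of s as functions
    have hsf0 : (fun z => s z t 0) = fun z => 2 * (u z t).re / (1 + ((u z t).re ^ 2 + (u z t).im ^ 2)) := by
      funext z; rw [hs]
      simp only [Matrix.cons_val_zero, Complex.normSq_apply]
      ring
    have hsf1 : (fun z => s z t 1) = fun z => 2 * (u z t).im / (1 + ((u z t).re ^ 2 + (u z t).im ^ 2)) := by
      funext z; rw [hs]
      simp only [Matrix.cons_val_one, Matrix.head_cons, Matrix.cons_val_zero, Complex.normSq_apply]
      ring
    have hsf2 : (fun z => s z t 2) = fun z => (1 - ((u z t).re ^ 2 + (u z t).im ^ 2)) / (1 + ((u z t).re ^ 2 + (u z t).im ^ 2)) := by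
      funext z; rw [hs]
      simp only [Matrix.cons_val_two, Matrix.tail_cons, Matrix.head_cons, Complex.normSq_apply]
      ring
    have htf0 : (fun τ => s x τ 0) = fun τ => 2 * (u x τ).re / (1 + ((u x τ).re ^ 2 + (u x τ).im ^ 2)) := by
      funext τ; rw [hs]
      simp only [Matrix.cons_val_zero, Complex.normSq_apply]
      ring
    have htf1 : (fun τ => s x τ 1) = fun τ => 2 * (u x τ).im / (1 + ((u x τ).re ^ 2 + (u x τ).im ^ 2)) := by
      funext τ; rw [hs]
      simp only [Matrix.cons_val_one, Matrix.head_cons, Matrix.cons_val_zero, Complex.normSq_apply]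
      ring
    have htf2 : (fun τ => s x τ 2) = fun τ => (1 - ((u x τ).re ^ 2 + (u x τ).im ^ 2)) / (1 + ((u x τ).re ^ 2 + (u x τ).im ^ 2)) := by
      funext τ; rw [hs]
      simp only [Matrix.cons_val_two, Matrix.tail_cons, Matrix.head_cons, Complex.normSq_apply]
      ring
    have hv0 : s x t 0 = 2 * (u x t).re / (1 + ((u x t).re ^ 2 + (u x t).im ^ 2)) := by
      rw [hs]
      simp only [Matrix.cons_val_zero, Complex.normSq_apply]
      ring
    have hv1 : s x t 1 = 2 * (u x t).im / (1 + ((u x t).re ^ 2 + (u x t).im ^ 2)) := by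
      rw [hs]
      simp only [Matrix.cons_val_one, Matrix.head_cons, Matrix.cons_val_zero, Complex.normSq_apply]
      ring
    have hv2 : s x t 2 = (1 - ((u x t).re ^ 2 + (u x t).im ^ 2)) / (1 + ((u x t).re ^ 2 + (u x t).im ^ 2)) := by
      rw [hs]
      simp only [Matrix.cons_val_two, Matrix.tail_cons, Matrix.head_cons, Complex.normSq_apply]
      ring
    -- first spatial derivatives of the components of s, as functions
    have hi0 : ∀ i : Fin 2, (fun y => pdR i (fun z => s z t 0) y) = fun y =>
        (2 * pdR i (fun z => (u z t).re) y * (1 + ((u y t).re ^ 2 + (u y t).im ^ 2))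
          - 2 * (u y t).re * (2 * ((u y t).re * pdR i (fun z => (u z t).re) y) + 2 * ((u y t).im * pdR i (fun z => (u z t).im) y)))
          / (1 + ((u y t).re ^ 2 + (u y t).im ^ 2)) ^ 2 := by
      intro i; funext y; rw [hsf0]; exact inner0 hcD hdD i y
    have hi1 : ∀ i : Fin 2, (fun y => pdR i (fun z => s z t 1) y) = fun y =>
        (2 * pdR i (fun z => (u z t).im) y * (1 + ((u y t).re ^ 2 + (u y t).im ^ 2))
          - 2 * (u y t).im * (2 * ((u y t).re * pdR i (fun z => (u z t).re) y) + 2 * ((u y t).im * pdR i (fun z => (u z t).im) y)))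
          / (1 + ((u y t).re ^ 2 + (u y t).im ^ 2)) ^ 2 := by
      intro i; funext y; rw [hsf1]; exact inner1 hcD hdD i y
    have hi2 : ∀ i : Fin 2, (fun y => pdR i (fun z => s z t 2) y) = fun y =>
        ((0 - (2 * ((u y t).re * pdR i (fun z => (u z t).re) y) + 2 * ((u y t).im * pdR i (fun z => (u z t).im) y)))
            * (1 + ((u y t).re ^ 2 + (u y t).im ^ 2))
          - (1 - ((u y t).re ^ 2 + (u y t).im ^ 2))
            * (2 * ((u y t).re * pdR i (fun z => (u z t).re) y) + 2 * ((u y t).im * pdR i (fun z => (u z t).im) y)))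
          / (1 + ((u y t).re ^ 2 + (u y t).im ^ 2)) ^ 2 := by
      intro i; funext y; rw [hsf2]; exact inner2 hcD hdD i y
    fin_cases i
    · rw [show (⟨0, by norm_num⟩ : Fin 3) = 0 from rfl]
      rw [htf0, time0 (haD t) (hbD t), hpt, hqt]
      simp only [cross, Matrix.cons_val_zero, Matrix.cons_val_one, Matrix.head_cons,
        Matrix.cons_val_two, Matrix.tail_cons]
      rw [hv1, hv2]
      simp only [lapR, Fin.sum_univ_two]
      rw [hi1 0, hi1 1, hi2 0, hi2 1]
      simp only [outer1 hcD hdD (diff_pdR hc2 0) (diff_pdR hd2 0) 0 x,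
        outer1 hcD hdD (diff_pdR hc2 1) (diff_pdR hd2 1) 1 x,
        outer2 hcD hdD (diff_pdR hc2 0) (diff_pdR hd2 0) 0 x,
        outer2 hcD hdD (diff_pdR hc2 1) (diff_pdR hd2 1) 1 x]
      field_simp
      ring
    · rw [show (⟨1, by norm_num⟩ : Fin 3) = 1 from rfl]
      rw [htf1, time1 (haD t) (hbD t), hpt, hqt]
      simp only [cross, Matrix.cons_val_zero, Matrix.cons_val_one, Matrix.head_cons,
        Matrix.cons_val_two, Matrix.tail_cons]
      rw [hv0, hv2]
      simp only [lapR, Fin.sum_univ_two]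
      rw [hi0 0, hi0 1, hi2 0, hi2 1]
      simp only [outer0 hcD hdD (diff_pdR hc2 0) (diff_pdR hd2 0) 0 x,
        outer0 hcD hdD (diff_pdR hc2 1) (diff_pdR hd2 1) 1 x,
        outer2 hcD hdD (diff_pdR hc2 0) (diff_pdR hd2 0) 0 x,
        outer2 hcD hdD (diff_pdR hc2 1) (diff_pdR hd2 1) 1 x]
      field_simp
      ring
    · rw [show (⟨2, by norm_num⟩ : Fin 3) = 2 from rfl]
      rw [htf2, time2 (haD t) (hbD t), hpt, hqt]
      simp only [cross, Matrix.cons_val_zero, Matrix.cons_val_one, Matrix.head_cons,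
        Matrix.cons_val_two, Matrix.tail_cons]
      rw [hv0, hv1]
      simp only [lapR, Fin.sum_univ_two]
      rw [hi0 0, hi0 1, hi1 0, hi1 1]
      simp only [outer0 hcD hdD (diff_pdR hc2 0) (diff_pdR hd2 0) 0 x,
        outer0 hcD hdD (diff_pdR hc2 1) (diff_pdR hd2 1) 1 x,
        outer1 hcD hdD (diff_pdR hc2 0) (diff_pdR hd2 0) 0 x,
        outer1 hcD hdD (diff_pdR hc2 1) (diff_pdR hd2 1) 1 x]
      field_simp
      ring
end

section
/- Uniform decay of Bessel functions: there is an absolute constant C such that for all integers n ≥ 0 and all r > 0, |J_n(r)| ≤ C (1 + |r² - n²|)^{-1/4}, where J_n is the Bessel function of the first kind of order n. -/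
open Real intervalIntegral

/-- Bessel function of the first kind of integer order `n`:
`J_n(r) = (1/π) ∫_0^π cos(nθ - r sin θ) dθ`. -/
noncomputable def besselJ (n : ℕ) (r : ℝ) : ℝ :=
  (1 / π) * ∫ θ in (0:ℝ)..π, Real.cos (n * θ - r * Real.sin θ)

section BesselAux

open Set MeasureTheory
open scoped Interval

lemma bessel_intble (n r a b : ℝ) :
    IntervalIntegrable (fun θ => Real.cos (n * θ - r * Real.sin θ)) volume a b := by
  apply Continuous.intervalIntegrable
  fun_prop

lemma bessel_vdc_first (n r μ a b : ℝ) (hr : 0 ≤ r) (hμ : 0 < μ) (hab : a ≤ b)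
    (h0 : 0 ≤ a) (hπ : b ≤ π)
    (hsgn : (∀ θ ∈ Set.Icc a b, μ ≤ n - r * Real.cos θ) ∨
            (∀ θ ∈ Set.Icc a b, n - r * Real.cos θ ≤ -μ)) :
    |∫ θ in a..b, Real.cos (n * θ - r * Real.sin θ)| ≤ 4 / μ := by
  set f : ℝ → ℝ := fun θ => n - r * Real.cos θ with hfdef
  have habs : ∀ θ ∈ Set.Icc a b, μ ≤ |f θ| := by
    intro θ hθ
    rcases hsgn with h | h
    · exact le_trans (h θ hθ) (le_abs_self _)
    · refine le_trans ?_ (neg_le_abs (f θ))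
      have := h θ hθ
      simp only [hfdef]
      linarith
  have hne : ∀ θ ∈ Set.Icc a b, f θ ≠ 0 := by
    intro θ hθ h
    have := habs θ hθ
    rw [h] at this; simp at this; linarith
  -- derivative facts
  have hf : ∀ x : ℝ, HasDerivAt f (r * Real.sin x) x := by
    intro x
    have := ((Real.hasDerivAt_cos x).const_mul r).const_sub n
    simpa [mul_neg] using this
  have hph : ∀ x : ℝ, HasDerivAt (fun θ => n * θ - r * Real.sin θ) (f x) x := by
    intro x
    have := ((hasDerivAt_id x).const_mul n).sub ((Real.hasDerivAt_sin x).const_mul r)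
    exact this.congr_deriv (by simp [hfdef])
  set u : ℝ → ℝ := fun θ => (f θ)⁻¹ with hudef
  set u' : ℝ → ℝ := fun θ => -(r * Real.sin θ) / (f θ) ^ 2 with hu'def
  set v : ℝ → ℝ := fun θ => Real.sin (n * θ - r * Real.sin θ) with hvdef
  set v' : ℝ → ℝ := fun θ => Real.cos (n * θ - r * Real.sin θ) * f θ with hv'def
  have hmem : ∀ x ∈ [[a, b]], x ∈ Set.Icc a b := by
    intro x hx; rwa [Set.uIcc_of_le hab] at hx
  have hu : ∀ x ∈ [[a, b]], HasDerivAt u (u' x) x := by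
    intro x hx
    exact (hf x).inv (hne x (hmem x hx))
  have hv : ∀ x : ℝ, HasDerivAt v (v' x) x := by
    intro x
    exact (Real.hasDerivAt_sin _).comp x (hph x)
  have hcontf : Continuous f := by fun_prop
  have hu'cont : ContinuousOn u' [[a, b]] := by
    apply ContinuousOn.div (by fun_prop) (by fun_prop)
    intro x hx
    exact pow_ne_zero _ (hne x (hmem x hx))
  have hu'int : IntervalIntegrable u' volume a b := hu'cont.intervalIntegrable
  have hv'int : IntervalIntegrable v' volume a b := by
    apply Continuous.intervalIntegrable; fun_prop
  have hibp := intervalIntegral.integral_mul_deriv_eq_deriv_mul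
    hu (fun x _ => hv x) hu'int hv'int
  have heq : (∫ θ in a..b, Real.cos (n * θ - r * Real.sin θ)) =
      ∫ θ in a..b, u θ * v' θ := by
    apply intervalIntegral.integral_congr
    intro x hx
    have := hne x (hmem x hx)
    show Real.cos _ = (f x)⁻¹ * (Real.cos (n * x - r * Real.sin x) * f x)
    rw [inv_mul_eq_div, mul_div_assoc, div_self this, mul_one]
  -- bound pieces
  have huabs : ∀ x ∈ Set.Icc a b, |u x| ≤ 1 / μ := by
    intro x hx
    rw [hudef]
    rw [abs_inv]
    rw [one_div]
    exact inv_anti₀ hμ (habs x hx)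
  have hvabs : ∀ x : ℝ, |v x| ≤ 1 := fun x =>
    abs_le.2 ⟨Real.neg_one_le_sin _, Real.sin_le_one _⟩
  have hu'neg : ∀ x ∈ Set.Icc a b, u' x ≤ 0 := by
    intro x hx
    apply div_nonpos_of_nonpos_of_nonneg
    · have : 0 ≤ Real.sin x := Real.sin_nonneg_of_nonneg_of_le_pi
        (le_trans h0 hx.1) (le_trans hx.2 hπ)
      nlinarith
    · positivity
  have hftc : (∫ θ in a..b, u' θ) = u b - u a :=
    intervalIntegral.integral_eq_sub_of_hasDerivAt hu hu'int
  have h3 : |∫ θ in a..b, u' θ * v θ| ≤ 2 / μ := by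
    calc |∫ θ in a..b, u' θ * v θ| ≤ ∫ θ in a..b, |u' θ * v θ| :=
          intervalIntegral.abs_integral_le_integral_abs hab
      _ ≤ ∫ θ in a..b, -u' θ := by
          have habsint : IntervalIntegrable (fun θ => |u' θ * v θ|) volume a b := by
            apply ContinuousOn.intervalIntegrable
            exact (hu'cont.mul (Continuous.continuousOn (by fun_prop))).abs
          apply intervalIntegral.integral_mono_on hab habsint hu'int.neg
          intro x hx
          rw [abs_mul]
          calc |u' x| * |v x| ≤ |u' x| * 1 :=
                mul_le_mul_of_nonneg_left (hvabs x) (abs_nonneg _)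
            _ = -u' x := by rw [mul_one, abs_of_nonpos (hu'neg x hx)]
      _ = -(u b - u a) := by rw [intervalIntegral.integral_neg, hftc]
      _ ≤ 2 / μ := by
          have h1 := abs_le.1 (huabs a ⟨le_refl a, hab⟩)
          have h2 := abs_le.1 (huabs b ⟨hab, le_refl b⟩)
          have h3 : (2:ℝ)/μ = 1/μ + 1/μ := by ring
          linarith [h1.1, h1.2, h2.1, h2.2]
  rw [heq, hibp]
  have h1 := abs_le.1 (huabs a ⟨le_refl a, hab⟩)
  have h2 := abs_le.1 (huabs b ⟨hab, le_refl b⟩)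
  have hva := abs_le.1 (hvabs a)
  have hvb := abs_le.1 (hvabs b)
  have e1 : |u b * v b| ≤ 1 / μ := by
    rw [abs_mul]
    calc |u b| * |v b| ≤ (1/μ) * 1 :=
      mul_le_mul (huabs b ⟨hab, le_refl b⟩) (hvabs b) (abs_nonneg _) (by positivity)
    _ = 1/μ := mul_one _
  have e2 : |u a * v a| ≤ 1 / μ := by
    rw [abs_mul]
    calc |u a| * |v a| ≤ (1/μ) * 1 :=
      mul_le_mul (huabs a ⟨le_refl a, hab⟩) (hvabs a) (abs_nonneg _) (by positivity)
    _ = 1/μ := mul_one _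
  have := abs_sub (u b * v b - u a * v a) (∫ θ in a..b, u' θ * v θ)
  calc |u b * v b - u a * v a - ∫ θ in a..b, u' θ * v θ|
      ≤ |u b * v b - u a * v a| + |∫ θ in a..b, u' θ * v θ| := abs_sub _ _
    _ ≤ (|u b * v b| + |u a * v a|) + 2/μ := add_le_add (abs_sub _ _) h3
    _ ≤ (1/μ + 1/μ) + 2/μ := by linarith [e1, e2]
    _ = 4/μ := by ring

lemma bessel_len_sq {a b : ℝ} (h0 : 0 ≤ a) (hab : a ≤ b) (hb : b ≤ π) :
    2 * ((b - a) / π) ^ 2 ≤ Real.cos a - Real.cos b := by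
  have hπ := Real.pi_pos
  set d := (b - a) / 2 with hd
  set m := (a + b) / 2 with hm
  have hd0 : 0 ≤ d := by rw [hd]; linarith
  have hdhalf : d ≤ π / 2 := by
    rw [hd]; linarith
  have hdm : d ≤ m := by rw [hd, hm]; linarith
  have hmub : m ≤ π - d := by rw [hd, hm]; linarith
  have hsins : Real.sin d ≤ Real.sin m := by
    rcases le_or_gt m (π / 2) with h | h
    · exact Real.sin_le_sin_of_le_of_le_pi_div_two (by linarith) h hdm
    · rw [← Real.sin_pi_sub m]
      exact Real.sin_le_sin_of_le_of_le_pi_div_two (by linarith) (by linarith) (by linarith)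
  have hlin : 2 / π * d ≤ Real.sin d := Real.mul_le_sin hd0 hdhalf
  have hexp : Real.cos a - Real.cos b = 2 * Real.sin m * Real.sin d := by
    rw [Real.cos_sub_cos]
    have h1 : (a - b) / 2 = -d := by rw [hd]; ring
    have h2 : (a + b) / 2 = m := hm.symm
    rw [h1, h2, Real.sin_neg]
    ring
  rw [hexp]
  have h2d : (b - a) / π = 2 / π * d := by rw [hd]; field_simp
  rw [h2d]
  have hsd0 : 0 ≤ Real.sin d := Real.sin_nonneg_of_nonneg_of_le_pi hd0 (by linarith)
  have hsm0 : 0 ≤ Real.sin m := Real.sin_nonneg_of_nonneg_of_le_pi (by linarith) (by linarith)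
  have hx0 : 0 ≤ 2 / π * d := by positivity
  calc 2 * (2 / π * d) ^ 2 = 2 * ((2/π*d) * (2/π*d)) := by ring
    _ ≤ 2 * (Real.sin m * Real.sin d) := by
        apply mul_le_mul_of_nonneg_left _ (by norm_num)
        exact mul_le_mul (le_trans hlin hsins) hlin hx0 hsm0
    _ = 2 * Real.sin m * Real.sin d := by ring

lemma bessel_len_lin {a b m : ℝ} (hab : a ≤ b) (hm : ∀ θ ∈ Set.Icc a b, m ≤ Real.sin θ) :
    m * (b - a) ≤ Real.cos a - Real.cos b := by
  have h1 : (∫ θ in a..b, m) ≤ ∫ θ in a..b, Real.sin θ := by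
    apply intervalIntegral.integral_mono_on hab intervalIntegrable_const
      (Continuous.intervalIntegrable Real.continuous_sin a b) hm
  rw [integral_sin] at h1
  simpa [mul_comm] using h1

noncomputable def besselClamp (y : ℝ) : ℝ := max (-1) (min 1 y)

lemma besselClamp_mem (y : ℝ) : besselClamp y ∈ Set.Icc (-1:ℝ) 1 := by
  constructor
  · exact le_max_left _ _
  · apply max_le (by norm_num) (min_le_left _ _)

lemma besselClamp_le {y : ℝ} (hy : -1 ≤ y) : besselClamp y ≤ y := by
  unfold besselClamp
  apply max_le hy (min_le_right _ _)

lemma besselClamp_ge {y : ℝ} (hy : y ≤ 1) : y ≤ besselClamp y := by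
  unfold besselClamp
  exact le_trans (le_min hy (le_refl y)) (le_max_right _ _)

lemma besselClamp_mono : Monotone besselClamp := fun x y h =>
  max_le_max (le_refl _) (min_le_min (le_refl _) h)

lemma besselClamp_lip {x y : ℝ} (h : y ≤ x) : besselClamp x - besselClamp y ≤ x - y := by
  unfold besselClamp
  simp only [max_def, min_def]
  split_ifs <;> linarith

lemma bessel_master (n r ρ : ℝ) (hn : 0 ≤ n) (hr : 0 < r) (hρ : 0 < ρ) :
    ∃ θ₁ θ₂ : ℝ, 0 ≤ θ₁ ∧ θ₁ ≤ θ₂ ∧ θ₂ ≤ π ∧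
      Real.cos θ₁ - Real.cos θ₂ ≤ 2 * ρ / r ∧
      (∀ θ ∈ Set.Icc θ₁ θ₂, r * Real.cos θ ≤ n + ρ ∧ (n - ρ ≤ r → n - ρ ≤ r * Real.cos θ)) ∧
      |∫ θ in (0:ℝ)..π, Real.cos (n * θ - r * Real.sin θ)| ≤ 8 / ρ + (θ₂ - θ₁) := by
  have hπ := Real.pi_pos
  set y₁ := (n + ρ) / r with hy₁
  set y₂ := (n - ρ) / r with hy₂
  have hy₁pos : 0 < y₁ := by positivity
  have hy21 : y₂ ≤ y₁ := by
    rw [hy₁, hy₂]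
    gcongr
    linarith
  set x₁ := besselClamp y₁ with hx₁
  set x₂ := besselClamp y₂ with hx₂
  set θ₁ := Real.arccos x₁ with hθ₁
  set θ₂ := Real.arccos x₂ with hθ₂
  have harc : Antitone Real.arccos := by
    intro x y hxy
    rw [Real.arccos_eq_pi_div_two_sub_arcsin, Real.arccos_eq_pi_div_two_sub_arcsin]
    linarith [Real.monotone_arcsin hxy]
  have hx21 : x₂ ≤ x₁ := besselClamp_mono hy21
  have hθ12 : θ₁ ≤ θ₂ := harc hx21
  have hθ₁0 : 0 ≤ θ₁ := Real.arccos_nonneg _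
  have hθ₂π : θ₂ ≤ π := Real.arccos_le_pi _
  have hθ₁π : θ₁ ≤ π := le_trans hθ12 hθ₂π
  have hθ₂0 : 0 ≤ θ₂ := le_trans hθ₁0 hθ12
  have hcos₁ : Real.cos θ₁ = x₁ := Real.cos_arccos (besselClamp_mem y₁).1 (besselClamp_mem y₁).2
  have hcos₂ : Real.cos θ₂ = x₂ := Real.cos_arccos (besselClamp_mem y₂).1 (besselClamp_mem y₂).2
  refine ⟨θ₁, θ₂, hθ₁0, hθ12, hθ₂π, ?_, ?_, ?_⟩
  · rw [hcos₁, hcos₂]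
    calc x₁ - x₂ ≤ y₁ - y₂ := besselClamp_lip hy21
      _ = 2 * ρ / r := by rw [hy₁, hy₂]; field_simp; ring
  · intro θ hθ
    have hcle : Real.cos θ ≤ x₁ := by
      rw [← hcos₁]
      exact Real.cos_le_cos_of_nonneg_of_le_pi hθ₁0 (le_trans hθ.2 hθ₂π) hθ.1
    have hcge : x₂ ≤ Real.cos θ := by
      rw [← hcos₂]
      exact Real.cos_le_cos_of_nonneg_of_le_pi (le_trans hθ₁0 hθ.1) hθ₂π hθ.2
    constructor
    · have h1 : x₁ ≤ y₁ := besselClamp_le (by linarith)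
      calc r * Real.cos θ ≤ r * y₁ := by
            apply mul_le_mul_of_nonneg_left (le_trans hcle h1) hr.le
        _ = n + ρ := by rw [hy₁]; field_simp
    · intro hcond
      have hy₂le1 : y₂ ≤ 1 := by rw [hy₂]; rw [div_le_one hr]; linarith
      have h2 : y₂ ≤ x₂ := besselClamp_ge hy₂le1
      calc n - ρ = r * y₂ := by rw [hy₂]; field_simp
        _ ≤ r * Real.cos θ := mul_le_mul_of_nonneg_left (le_trans h2 hcge) hr.le
  · have hsplit : (∫ θ in (0:ℝ)..π, Real.cos (n * θ - r * Real.sin θ)) =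
        (∫ θ in (0:ℝ)..θ₁, Real.cos (n * θ - r * Real.sin θ)) +
        (∫ θ in θ₁..θ₂, Real.cos (n * θ - r * Real.sin θ)) +
        (∫ θ in θ₂..π, Real.cos (n * θ - r * Real.sin θ)) := by
      rw [intervalIntegral.integral_add_adjacent_intervals (bessel_intble n r 0 θ₁) (bessel_intble n r θ₁ θ₂),
        intervalIntegral.integral_add_adjacent_intervals (bessel_intble n r 0 θ₂) (bessel_intble n r θ₂ π)]
    have hmid : |∫ θ in θ₁..θ₂, Real.cos (n * θ - r * Real.sin θ)| ≤ θ₂ - θ₁ := by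
      have := intervalIntegral.norm_integral_le_of_norm_le_const
        (C := 1) (f := fun θ => Real.cos (n * θ - r * Real.sin θ)) (a := θ₁) (b := θ₂)
        (fun x _ => by simpa using Real.abs_cos_le_one _)
      rw [Real.norm_eq_abs] at this
      calc |∫ θ in θ₁..θ₂, Real.cos (n * θ - r * Real.sin θ)| ≤ 1 * |θ₂ - θ₁| := this
        _ = θ₂ - θ₁ := by rw [one_mul, abs_of_nonneg (by linarith)]
    have hleft : |∫ θ in (0:ℝ)..θ₁, Real.cos (n * θ - r * Real.sin θ)| ≤ 4 / ρ := by
      rcases le_or_gt 1 y₁ with h | h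
      · have : x₁ = 1 := by
          rw [hx₁]; unfold besselClamp; rw [min_eq_left h]; norm_num
        have hθ₁eq : θ₁ = 0 := by rw [hθ₁, this, Real.arccos_one]
        rw [hθ₁eq, intervalIntegral.integral_same, abs_zero]
        positivity
      · apply bessel_vdc_first n r ρ 0 θ₁ hr.le hρ hθ₁0 (le_refl 0) hθ₁π
        right
        intro θ hθ
        have hx₁eq : x₁ = y₁ := by
          rw [hx₁]; unfold besselClamp
          rw [min_eq_right h.le, max_eq_right (by linarith)]
        have : Real.cos θ₁ ≤ Real.cos θ :=
          Real.cos_le_cos_of_nonneg_of_le_pi hθ.1 hθ₁π hθ.2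
        rw [hcos₁, hx₁eq] at this
        have : n + ρ ≤ r * Real.cos θ := by
          calc n + ρ = r * y₁ := by rw [hy₁]; field_simp
            _ ≤ r * Real.cos θ := mul_le_mul_of_nonneg_left this hr.le
        linarith
    have hright : |∫ θ in θ₂..π, Real.cos (n * θ - r * Real.sin θ)| ≤ 4 / ρ := by
      rcases lt_or_ge y₂ (-1) with h | h
      · have : x₂ = -1 := by
          rw [hx₂]; unfold besselClamp
          rw [min_eq_right (by linarith), max_eq_left h.le]
        have hθ₂eq : θ₂ = π := by rw [hθ₂, this, Real.arccos_neg_one]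
        rw [hθ₂eq, intervalIntegral.integral_same, abs_zero]
        positivity
      · apply bessel_vdc_first n r ρ θ₂ π hr.le hρ hθ₂π hθ₂0 (le_refl π)
        left
        intro θ hθ
        have hx₂le : x₂ ≤ y₂ := besselClamp_le h
        have hcc : Real.cos θ ≤ Real.cos θ₂ :=
          Real.cos_le_cos_of_nonneg_of_le_pi hθ₂0 hθ.2 hθ.1
        rw [hcos₂] at hcc
        have : r * Real.cos θ ≤ n - ρ := by
          calc r * Real.cos θ ≤ r * y₂ :=
              mul_le_mul_of_nonneg_left (le_trans hcc hx₂le) hr.le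
            _ = n - ρ := by rw [hy₂]; field_simp
        linarith
    rw [hsplit]
    have t1 := abs_add_le
      ((∫ θ in (0:ℝ)..θ₁, Real.cos (n * θ - r * Real.sin θ)) +
       (∫ θ in θ₁..θ₂, Real.cos (n * θ - r * Real.sin θ)))
      (∫ θ in θ₂..π, Real.cos (n * θ - r * Real.sin θ))
    have t2 := abs_add_le
      (∫ θ in (0:ℝ)..θ₁, Real.cos (n * θ - r * Real.sin θ))
      (∫ θ in θ₁..θ₂, Real.cos (n * θ - r * Real.sin θ))
    have h8 : (8:ℝ)/ρ = 4/ρ + 4/ρ := by ring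
    linarith


end BesselAux

open Set MeasureTheory in
open scoped Interval in
set_option maxHeartbeats 4000000 in
/-- Uniform decay of Bessel functions: `|J_n(r)| ≤ C (1 + |r² - n²|)^{-1/4}` for all
integers `n ≥ 0` and all `r > 0`, with `C` absolute. -/
theorem besselJ_uniform_decay :
    ∃ C > (0 : ℝ), ∀ (n : ℕ) (r : ℝ), 0 < r →
      |besselJ n r| ≤ C * (1 + |r ^ 2 - (n : ℝ) ^ 2|) ^ (-(1/4) : ℝ) := by
  have hπ := Real.pi_pos
  have hπ3 : 3 < π := by linarith [Real.pi_gt_three]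
  refine ⟨80, by norm_num, ?_⟩
  intro n r hr
  set nn : ℝ := (n : ℝ) with hnn
  have hn0 : 0 ≤ nn := Nat.cast_nonneg n
  set D : ℝ := 1 + |r ^ 2 - nn ^ 2| with hD
  have hD1 : 1 ≤ D := by rw [hD]; linarith [abs_nonneg (r ^ 2 - nn ^ 2)]
  have hD0 : 0 < D := by linarith
  set ρ : ℝ := D ^ ((1:ℝ)/4) with hρdef
  have hρ1 : 1 ≤ ρ := Real.one_le_rpow hD1 (by norm_num)
  have hρ0 : 0 < ρ := by linarith
  have hρ4 : ρ ^ 4 = D := by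
    rw [hρdef, ← Real.rpow_natCast (D ^ ((1:ℝ)/4)) 4, ← Real.rpow_mul hD0.le]
    norm_num
  have hrpow : D ^ (-(1/4) : ℝ) = ρ⁻¹ := by
    rw [Real.rpow_neg hD0.le]
  -- reduce to a bound on the integral
  have hred : ∀ X : ℝ, 0 ≤ X →
      |∫ θ in (0:ℝ)..π, Real.cos (nn * θ - r * Real.sin θ)| ≤ X →
      |besselJ n r| ≤ X := by
    intro X hX h
    rw [besselJ]
    rw [abs_mul]
    have h1π : |1 / π| = 1/π := abs_of_pos (by positivity)
    rw [h1π]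
    calc 1/π * |∫ θ in (0:ℝ)..π, Real.cos (nn * θ - r * Real.sin θ)| ≤ 1 * X := by
          apply mul_le_mul _ h (abs_nonneg _) (by norm_num)
          rw [div_le_one hπ]; linarith
      _ = X := one_mul X
  rw [hrpow]
  have hgoal20 : (80:ℝ) * ρ⁻¹ = 80 / ρ := by ring
  rw [hgoal20]
  have h20ρ : 0 ≤ 80 / ρ := by positivity
  apply hred _ h20ρ
  clear hred h20ρ hgoal20 hrpow
  clear_value D ρ
  clear hρdef
  -- main case analysis
  rcases le_or_gt ρ 20 with hsmall | hbig
  · -- trivial bound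
    have htriv : |∫ θ in (0:ℝ)..π, Real.cos (nn * θ - r * Real.sin θ)| ≤ π := by
      have := intervalIntegral.norm_integral_le_of_norm_le_const
        (C := 1) (f := fun θ => Real.cos (nn * θ - r * Real.sin θ)) (a := 0) (b := π)
        (fun x _ => by simpa using Real.abs_cos_le_one _)
      rw [Real.norm_eq_abs] at this
      simpa [abs_of_pos hπ] using this
    calc |∫ θ in (0:ℝ)..π, Real.cos (nn * θ - r * Real.sin θ)| ≤ π := htriv
      _ ≤ 80 / ρ := by
          rw [le_div_iff₀ hρ0]
          nlinarith [Real.pi_lt_d2]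
  · -- ρ > 20
    have hρ2 : ρ ^ 2 ≤ ρ ^ 3 / 20 := by nlinarith
    have hρ400 : 400 ≤ ρ ^ 2 := by nlinarith
    have hρ4big : 160000 ≤ ρ ^ 4 := by nlinarith
    rcases le_or_gt (ρ ^ 3) (8 * r) with hA | hBC
    · -- Case A
      obtain ⟨θ₁, θ₂, h10, h12, h2π, hlen, _, hint⟩ := bessel_master nn r ρ hn0 hr hρ0
      set L := θ₂ - θ₁ with hL
      have hL0 : 0 ≤ L := by rw [hL]; linarith
      have hsq := bessel_len_sq h10 h12 h2π
      -- L^2 * r ≤ π^2 * ρ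
      have h1 : L ^ 2 * r ≤ π ^ 2 * ρ := by
        have h2 : 2 * (L / π) ^ 2 ≤ 2 * ρ / r := le_trans hsq hlen
        have h3 : 2 * (L/π)^2 = (2 * L^2)/π^2 := by rw [div_pow]; ring
        rw [h3] at h2
        have hπ2 : (0:ℝ) < π^2 := by positivity
        rw [div_le_div_iff₀ hπ2 hr] at h2
        nlinarith
      have hLρ : L ≤ 9 / ρ := by
        have h4 : L ^ 2 * ρ ^ 3 ≤ 8 * (π ^ 2 * ρ) := by
          nlinarith [mul_le_mul_of_nonneg_left hA (sq_nonneg L), h1]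
        have hπ10 : π ^ 2 ≤ 10 := by nlinarith [Real.pi_lt_d2, hπ]
        have h5' : L ^ 2 * ρ ^ 2 * ρ ≤ 80 * ρ := by nlinarith [h4, hπ10, hρ0]
        have h5 : (L * ρ) ^ 2 ≤ 81 := by nlinarith [h5', hρ0]
        have h6 : L * ρ ≤ 9 := by
          nlinarith [h5, mul_nonneg hL0 hρ0.le]
        rw [le_div_iff₀ hρ0]; linarith
      calc |∫ θ in (0:ℝ)..π, Real.cos (nn * θ - r * Real.sin θ)| ≤ 8/ρ + L := hint
        _ ≤ 8/ρ + 9/ρ := by linarith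
        _ ≤ 80/ρ := by
            have e : (8:ℝ)/ρ + 9/ρ = 17/ρ := by ring
            rw [e, div_le_div_iff₀ hρ0 hρ0]
            nlinarith [hρ0]
    · rcases le_or_gt nn r with hnr | hnr
      · -- Case B
        have habs : |r ^ 2 - nn ^ 2| = r ^ 2 - nn ^ 2 := by
          apply abs_of_nonneg; nlinarith
        have hΔ : r ^ 2 - nn ^ 2 = ρ ^ 4 - 1 := by rw [hρ4, hD, habs]; ring
        obtain ⟨θ₁, θ₂, h10, h12, h2π, hlen, hmidpt, hint⟩ := bessel_master nn r ρ hn0 hr hρ0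
        set L := θ₂ - θ₁ with hL
        have hL0 : 0 ≤ L := by rw [hL]; linarith
        -- sin lower bound on middle interval
        have hsin : ∀ θ ∈ Set.Icc θ₁ θ₂, ρ ^ 2 / (2 * r) ≤ Real.sin θ := by
          intro θ hθ
          obtain ⟨hub, hlbc⟩ := hmidpt θ hθ
          have hlb : nn - ρ ≤ r * Real.cos θ := hlbc (by linarith)
          have hsq : (r * Real.cos θ) ^ 2 ≤ (nn + ρ) ^ 2 := by
            nlinarith [mul_nonneg (by linarith : (0:ℝ) ≤ nn + ρ - r * Real.cos θ)
              (by linarith : (0:ℝ) ≤ r * Real.cos θ - (nn - ρ))]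
          have hsinθ0 : 0 ≤ Real.sin θ :=
            Real.sin_nonneg_of_nonneg_of_le_pi (by linarith [hθ.1]) (by linarith [hθ.2])
          have hsin2 : (r * Real.sin θ) ^ 2 = r ^ 2 - (r * Real.cos θ) ^ 2 := by
            have h := Real.sin_sq_add_cos_sq θ
            linear_combination r ^ 2 * h
          -- r² sin²θ ≥ ρ⁴/2
          have hb1 : 2 * nn * ρ ≤ ρ ^ 4 / 4 := by
            have e1 : 8 * r * ρ ≤ ρ ^ 3 * ρ :=
              mul_le_mul_of_nonneg_right hBC.le hρ0.le
            nlinarith [mul_le_mul_of_nonneg_right hnr hρ0.le]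
          have hb2 : ρ ^ 2 ≤ ρ ^ 4 / 400 := by nlinarith
          have hkey : ρ ^ 4 / 2 ≤ (r * Real.sin θ) ^ 2 := by
            rw [hsin2]
            nlinarith [hsq, hb1, hb2, hΔ, hρ4big]
          have : ρ ^ 2 / 2 ≤ r * Real.sin θ := by
            by_contra hcon
            push_neg at hcon
            nlinarith [mul_nonneg hr.le hsinθ0, hkey]
          rw [div_le_iff₀ (by positivity : (0:ℝ) < 2 * r)]
          nlinarith
        have hLb : L ≤ 4 / ρ := by
          have h1 := bessel_len_lin h12 hsin
          have h2 : ρ ^ 2 / (2 * r) * L ≤ 2 * ρ / r := le_trans h1 hlen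
          have h3 : (0:ℝ) < 2 * r := by positivity
          have h4 : ρ ^ 2 / (2 * r) * L * (2 * r) = ρ ^ 2 * L := by
            field_simp
          have h5 : 2 * ρ / r * (2 * r) = 4 * ρ := by
            field_simp; ring
          have h6 : ρ ^ 2 * L ≤ 4 * ρ := by
            rw [← h4, ← h5]
            exact mul_le_mul_of_nonneg_right h2 h3.le
          have h7 : L * ρ * ρ ≤ 4 * ρ := by ring_nf; ring_nf at h6; linarith
          rw [le_div_iff₀ hρ0]
          exact le_of_mul_le_mul_right h7 hρ0
        calc |∫ θ in (0:ℝ)..π, Real.cos (nn * θ - r * Real.sin θ)| ≤ 8/ρ + L := hint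
          _ ≤ 8/ρ + 4/ρ := by linarith
          _ ≤ 80/ρ := by
              have e : (8:ℝ)/ρ + 4/ρ = 12/ρ := by ring
              rw [e, div_le_div_iff₀ hρ0 hρ0]
              nlinarith [hρ0]
      · -- Case C : n > r
        have habs : |r ^ 2 - nn ^ 2| = nn ^ 2 - r ^ 2 := by
          rw [abs_sub_comm]; apply abs_of_nonneg; nlinarith
        have hΔ : nn ^ 2 - r ^ 2 = ρ ^ 4 - 1 := by rw [hρ4, hD, habs]; ring
        set μ := nn - r with hμ
        have hμ0 : 0 < μ := by rw [hμ]; linarith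
        have hvdc := bessel_vdc_first nn r μ 0 π hr.le hμ0 hπ.le (le_refl 0) (le_refl π)
          (Or.inl ?_)
        swap
        · intro θ hθ
          have : Real.cos θ ≤ 1 := Real.cos_le_one θ
          rw [hμ]
          nlinarith
        -- 4/μ ≤ 20/ρ
        have hnub : nn ≤ r + ρ ^ 2 := by
          by_contra hcon
          push_neg at hcon
          have h1 : (r + ρ ^ 2) ^ 2 < nn ^ 2 := by
            nlinarith [hr.le, sq_nonneg ρ]
          nlinarith [hΔ, mul_pos hr (by positivity : (0:ℝ) < ρ ^ 2)]
        have hsum : nn + r ≤ (3/10) * ρ ^ 3 := by linarith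
        have hid : μ * (nn + r) = nn ^ 2 - r ^ 2 := by rw [hμ]; ring
        have hfin : 4 / μ ≤ 80 / ρ := by
          rw [div_le_div_iff₀ hμ0 hρ0]
          nlinarith [mul_le_mul_of_nonneg_left hsum hμ0.le, hΔ, hid, hρ4big, hρ0]
        exact le_trans hvdc hfin
end

section
/- Van der Corput / stationary phase bound for the quadratic phase: there is a constant C such that for all a, b ∈ ℝ and every smooth cutoff χ supported in [1/2, 2] with |χ| + |χ'| ≤ 1, |∫_ℝ χ(s) e^{i(a s - b s²)} ds| ≤ C (1 + |a|)^{-1/2} whenever |b| ≤ |a|/100, and in general |∫_ℝ χ(s) e^{i(a s - b s²)} ds| ≤ C (1 + |b|)^{-1/2} when |b| ≥ 1. -/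
open Complex Real MeasureTheory


lemma ibp_bound (a b α β m : ℝ) (χ : ℝ → ℝ) (hχ : ContDiff ℝ 1 χ)
    (hχb : ∀ s, |χ s| + |deriv χ s| ≤ 1) (hαβ : α ≤ β) (hm : 0 < m)
    (hψ : ∀ s ∈ Set.Icc α β, m ≤ |a - 2*b*s|) :
    ‖∫ s in α..β, (χ s : ℂ) * Complex.exp (Complex.I * ((a*s - b*s^2 : ℝ) : ℂ))‖
      ≤ (4 + (β - α))/m := by
  set ψ : ℝ → ℝ := fun s => a - 2*b*s with hψdef
  have hψne : ∀ s ∈ Set.Icc α β, ψ s ≠ 0 := fun s hs => by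
    have := hψ s hs; intro h; rw [hψdef] at h; simp only [h, abs_zero] at this; linarith
  have hχ1 : ∀ s, |χ s| ≤ 1 := fun s => by have := hχb s; have := abs_nonneg (deriv χ s); linarith
  have hχ'1 : ∀ s, |deriv χ s| ≤ 1 := fun s => by have := hχb s; have := abs_nonneg (χ s); linarith
  set h : ℝ → ℝ := fun s => χ s / ψ s with hdef
  set h' : ℝ → ℝ := fun s => deriv χ s / ψ s + 2*b*χ s/(ψ s)^2 with h'def
  set v : ℝ → ℂ := fun s => Complex.exp (Complex.I * ((a*s - b*s^2 : ℝ) : ℂ)) with vdef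
  set v' : ℝ → ℂ := fun s => v s * (Complex.I * (ψ s : ℂ)) with v'def
  set u : ℝ → ℂ := fun s => -Complex.I * (h s : ℂ) with udef
  set u' : ℝ → ℂ := fun s => -Complex.I * (h' s : ℂ) with u'def
  have hχd : ∀ s, HasDerivAt χ (deriv χ s) s := fun s =>
    ((hχ.differentiable one_ne_zero) s).hasDerivAt
  have hψd : ∀ s : ℝ, HasDerivAt ψ (-(2*b)) s := by
    intro s
    simpa using ((hasDerivAt_id s).const_mul (2*b)).const_sub a
  have hhd : ∀ s ∈ Set.Icc α β, HasDerivAt h (h' s) s := by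
    intro s hs
    have := (hχd s).div (hψd s) (hψne s hs)
    have h0 : a - 2*b*s ≠ 0 := hψne s hs
    refine this.congr_deriv ?_
    have h1 : ψ s ≠ 0 := hψne s hs
    simp only [h'def]
    field_simp
    ring
  have hud : ∀ s ∈ Set.Icc α β, HasDerivAt u (u' s) s := by
    intro s hs
    exact ((hhd s hs).ofReal_comp).const_mul (-Complex.I)
  have hvd : ∀ s : ℝ, HasDerivAt v (v' s) s := by
    intro s
    have hφ : HasDerivAt (fun t : ℝ => a*t - b*t^2) (ψ s) s := by
      have h1 : HasDerivAt (fun t : ℝ => a*t) a s := by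
        simpa using (hasDerivAt_id s).const_mul a
      have h2 : HasDerivAt (fun t : ℝ => b*t^2) (b*(2*s)) s := by
        simpa using (hasDerivAt_pow 2 s).const_mul b
      have := h1.sub h2
      refine this.congr_deriv ?_
      simp [hψdef]; ring
    have hinner : HasDerivAt (fun t : ℝ => Complex.I * ((a*t - b*t^2 : ℝ) : ℂ))
        (Complex.I * (ψ s : ℂ)) s := (hφ.ofReal_comp).const_mul Complex.I
    exact hinner.cexp
  -- continuity facts
  have hχc : Continuous χ := hχ.continuous
  have hχ'c : Continuous (deriv χ) := hχ.continuous_deriv le_rfl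
  have hψc : Continuous ψ := by simp only [hψdef]; fun_prop
  have hvc : Continuous v := by simp only [vdef]; fun_prop
  have hIccU : Set.uIcc α β = Set.Icc α β := Set.uIcc_of_le hαβ
  have hψ2ne : ∀ s ∈ Set.Icc α β, (ψ s)^2 ≠ 0 := fun s hs => pow_ne_zero _ (hψne s hs)
  have hh'cont : ContinuousOn h' (Set.Icc α β) := by
    simp only [h'def]
    exact (hχ'c.continuousOn.div hψc.continuousOn hψne).add
      (((continuous_const.mul hχc).continuousOn).div ((hψc.pow 2).continuousOn) hψ2ne)
  have hu'cont : ContinuousOn u' (Set.Icc α β) := by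
    simp only [u'def]
    exact continuousOn_const.mul (Complex.continuous_ofReal.comp_continuousOn hh'cont)
  have hu'int : IntervalIntegrable u' volume α β := by
    apply ContinuousOn.intervalIntegrable; rw [hIccU]; exact hu'cont
  have hv'int : IntervalIntegrable v' volume α β := by
    apply Continuous.intervalIntegrable
    simp only [v'def]
    exact hvc.mul (continuous_const.mul (Complex.continuous_ofReal.comp hψc))
  have hudU : ∀ s ∈ Set.uIcc α β, HasDerivAt u (u' s) s := by rw [hIccU]; exact hud
  have hvdU : ∀ s ∈ Set.uIcc α β, HasDerivAt v (v' s) s := fun s _ => hvd s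
  have ibp : ∫ s in α..β, u s * v' s
      = u β * v β - u α * v α - ∫ s in α..β, u' s * v s :=
    intervalIntegral.integral_mul_deriv_eq_deriv_mul hudU hvdU hu'int hv'int
  have hFuv : ∀ s ∈ Set.Icc α β,
      (χ s : ℂ) * Complex.exp (Complex.I * ((a*s - b*s^2 : ℝ) : ℂ)) = u s * v' s := by
    intro s hs
    have hmul : h s * ψ s = χ s := div_mul_cancel₀ _ (hψne s hs)
    have : u s * v' s = ((-Complex.I) * Complex.I) * (((h s : ℂ) * (ψ s : ℂ)) * v s) := by
      simp only [udef, v'def]; ring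
    rw [this]
    have hIs : (-Complex.I) * Complex.I = 1 := by
      rw [neg_mul, Complex.I_mul_I]; norm_num
    rw [hIs, one_mul, ← Complex.ofReal_mul, hmul]
  have hFeq : (∫ s in α..β, (χ s : ℂ) * Complex.exp (Complex.I * ((a*s - b*s^2 : ℝ) : ℂ)))
      = ∫ s in α..β, u s * v' s := by
    apply intervalIntegral.integral_congr
    rw [hIccU]; exact fun s hs => hFuv s hs
  -- norms
  have hv1 : ∀ s, ‖v s‖ = 1 := by
    intro s
    simp only [vdef, mul_comm Complex.I _]
    exact Complex.norm_exp_ofReal_mul_I _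
  have hbdry : ∀ s ∈ Set.Icc α β, ‖u s * v s‖ ≤ 1/m := by
    intro s hs
    rw [norm_mul, hv1, mul_one, udef]
    simp only [norm_mul, norm_neg, Complex.norm_I, one_mul, Complex.norm_real,
      Real.norm_eq_abs]
    rw [hdef, abs_div]
    exact div_le_div₀ (by norm_num) (hχ1 s) hm (hψ s hs)
  -- bound the remainder integral
  have hpt : ∀ s ∈ Set.Icc α β, ‖u' s * v s‖ ≤ 1/m + 2*|b|/(ψ s)^2 := by
    intro s hs
    have hd : (0:ℝ) < (ψ s)^2 :=
      lt_of_le_of_ne (sq_nonneg _) (Ne.symm (pow_ne_zero 2 (hψne s hs)))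
    rw [norm_mul, hv1, mul_one, u'def]
    simp only [norm_mul, norm_neg, Complex.norm_I, one_mul, Complex.norm_real,
      Real.norm_eq_abs]
    rw [h'def]
    have h1 : |deriv χ s / ψ s| ≤ 1/m := by
      rw [abs_div]; exact div_le_div₀ (by norm_num) (hχ'1 s) hm (hψ s hs)
    have h2 : |2*b*χ s/(ψ s)^2| ≤ 2*|b|/(ψ s)^2 := by
      rw [abs_div, _root_.abs_of_nonneg (sq_nonneg (ψ s))]
      gcongr
      calc |2*b*χ s| = |2*b| * |χ s| := abs_mul _ _
        _ ≤ |2*b| * 1 := by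
            apply mul_le_mul_of_nonneg_left (hχ1 s) (abs_nonneg _)
        _ = 2*|b| := by rw [mul_one, abs_mul]; norm_num
    calc |deriv χ s / ψ s + 2*b*χ s/(ψ s)^2| ≤ |deriv χ s / ψ s| + |2*b*χ s/(ψ s)^2| :=
          abs_add_le _ _
      _ ≤ 1/m + 2*|b|/(ψ s)^2 := add_le_add h1 h2
  have hg_int : IntervalIntegrable (fun s => 1/m + 2*|b|/(ψ s)^2) volume α β := by
    apply ContinuousOn.intervalIntegrable
    rw [hIccU]
    exact continuousOn_const.add
      (continuousOn_const.div ((hψc.pow 2).continuousOn) hψ2ne)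
  have hquad : (∫ s in α..β, 2*|b|/(ψ s)^2) ≤ 2/m := by
    by_cases hb : b = 0
    · simp only [hb, abs_zero, mul_zero, zero_div, intervalIntegral.integral_const,
        smul_eq_mul, mul_zero]
      positivity
    · set G : ℝ → ℝ := fun s => (|b|/b) * (ψ s)⁻¹ with Gdef
      have hGd : ∀ s ∈ Set.uIcc α β, HasDerivAt G (2*|b|/(ψ s)^2) s := by
        rw [hIccU]
        intro s hs
        have := ((hψd s).inv (hψne s hs)).const_mul (|b|/b)
        refine this.congr_deriv ?_
        have h0 : ψ s ≠ 0 := hψne s hs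
        field_simp
      have hint : IntervalIntegrable (fun s => 2*|b|/(ψ s)^2) volume α β := by
        apply ContinuousOn.intervalIntegrable
        rw [hIccU]
        exact continuousOn_const.div ((hψc.pow 2).continuousOn) hψ2ne
      rw [intervalIntegral.integral_eq_sub_of_hasDerivAt hGd hint]
      have hGb : ∀ s ∈ Set.Icc α β, |G s| ≤ 1/m := by
        intro s hs
        have habs : |G s| = |ψ s|⁻¹ := by
          rw [Gdef]
          rw [abs_mul, abs_div, _root_.abs_abs, div_self (abs_ne_zero.mpr hb), one_mul,
            abs_inv]
        rw [habs]
        have := one_div_le_one_div_of_le hm (hψ s hs)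
        simpa [one_div] using this
      have h3 := abs_le.mp (hGb β (Set.right_mem_Icc.mpr hαβ))
      have h4 := abs_le.mp (hGb α (Set.left_mem_Icc.mpr hαβ))
      calc G β - G α ≤ 1/m - -(1/m) := sub_le_sub h3.2 h4.1
        _ = 2/m := by ring
  have hrem : ‖∫ s in α..β, u' s * v s‖ ≤ (β - α)/m + 2/m := by
    have hnint : IntervalIntegrable (fun s => ‖u' s * v s‖) volume α β := by
      apply ContinuousOn.intervalIntegrable
      rw [hIccU]
      exact (hu'cont.mul hvc.continuousOn).norm
    have h3 : (∫ s in α..β, (1/m + 2*|b|/(ψ s)^2))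
        = (β - α) * (1/m) + ∫ s in α..β, 2*|b|/(ψ s)^2 := by
      rw [intervalIntegral.integral_add intervalIntegrable_const]
      · simp [intervalIntegral.integral_const, smul_eq_mul]
      · apply ContinuousOn.intervalIntegrable
        rw [hIccU]
        exact continuousOn_const.div ((hψc.pow 2).continuousOn) hψ2ne
    calc ‖∫ s in α..β, u' s * v s‖ ≤ ∫ s in α..β, ‖u' s * v s‖ :=
          intervalIntegral.norm_integral_le_integral_norm hαβ
      _ ≤ ∫ s in α..β, (1/m + 2*|b|/(ψ s)^2) :=
          intervalIntegral.integral_mono_on hαβ hnint hg_int hpt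
      _ = (β - α) * (1/m) + ∫ s in α..β, 2*|b|/(ψ s)^2 := h3
      _ ≤ (β - α) * (1/m) + 2/m := by linarith [hquad]
      _ = (β - α)/m + 2/m := by ring
  -- assemble
  rw [hFeq, ibp]
  have hβ2 := hbdry β (Set.right_mem_Icc.mpr hαβ)
  have hα2 := hbdry α (Set.left_mem_Icc.mpr hαβ)
  calc ‖u β * v β - u α * v α - ∫ s in α..β, u' s * v s‖
      ≤ ‖u β * v β - u α * v α‖ + ‖∫ s in α..β, u' s * v s‖ := norm_sub_le _ _
    _ ≤ (‖u β * v β‖ + ‖u α * v α‖) + ‖∫ s in α..β, u' s * v s‖ := by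
        have := norm_sub_le (u β * v β) (u α * v α); linarith
    _ ≤ (1/m + 1/m) + ((β - α)/m + 2/m) := by
        have := hrem; linarith
    _ = (4 + (β - α))/m := by ring

lemma vdcq_triv (a b : ℝ) (χ : ℝ → ℝ) (hχ1 : ∀ s, |χ s| ≤ 1) {α β : ℝ} (hαβ : α ≤ β) :
    ‖∫ s in α..β, (χ s : ℂ) * Complex.exp (Complex.I * ((a*s - b*s^2 : ℝ) : ℂ))‖ ≤ β - α := by
  have h := intervalIntegral.norm_integral_le_of_norm_le_const (C := 1)
    (f := fun s => (χ s : ℂ) * Complex.exp (Complex.I * ((a*s - b*s^2 : ℝ) : ℂ)))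
    (a := α) (b := β) ?_
  · rw [one_mul, _root_.abs_of_nonneg (sub_nonneg.mpr hαβ)] at h
    exact h
  · intro x _
    rw [norm_mul, mul_comm Complex.I, Complex.norm_exp_ofReal_mul_I, mul_one,
      Complex.norm_real, Real.norm_eq_abs]
    exact hχ1 x

lemma vdcq_rpow (x : ℝ) (hx : 0 ≤ x) :
    (1 + x) ^ (-(1/2) : ℝ) = (Real.sqrt (1 + x))⁻¹ := by
  rw [Real.rpow_neg (by positivity), ← Real.sqrt_eq_rpow]

/-- Van der Corput / stationary phase bound for the quadratic phase `φ(s) = a s - b s²`: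
a non-stationary bound `C (1+|a|)^{-1/2}` when `|b| ≤ |a|/100`, and a stationary bound
`C (1+|b|)^{-1/2}` when `|b| ≥ 1`, for C¹ cutoffs `χ` supported in `[1/2, 2]`
with `|χ| + |χ'| ≤ 1`. -/
theorem van_der_corput_quadratic :
    ∃ C > (0 : ℝ), ∀ (a b : ℝ) (χ : ℝ → ℝ), ContDiff ℝ 1 χ →
      (Function.support χ ⊆ Set.Icc (1/2) 2) →
      (∀ s, |χ s| + |deriv χ s| ≤ 1) →
      ((|b| ≤ |a| / 100 →
          ‖∫ s : ℝ, (χ s : ℂ) * Complex.exp (Complex.I * (a * s - b * s ^ 2))‖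
            ≤ C * (1 + |a|) ^ (-(1/2) : ℝ)) ∧
        (1 ≤ |b| →
          ‖∫ s : ℝ, (χ s : ℂ) * Complex.exp (Complex.I * (a * s - b * s ^ 2))‖
            ≤ C * (1 + |b|) ^ (-(1/2) : ℝ))) := by
  refine ⟨100, by norm_num, ?_⟩
  intro a b χ hχ hsupp hχb
  have hχ1 : ∀ s, |χ s| ≤ 1 := fun s => by
    have := hχb s; have := abs_nonneg (deriv χ s); linarith
  set F : ℝ → ℂ := fun s => (χ s : ℂ) * Complex.exp (Complex.I * ((a*s - b*s^2 : ℝ) : ℂ))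
    with Fdef
  have hFc : Continuous F := by
    have hc := hχ.continuous
    apply Continuous.mul
    · exact Complex.continuous_ofReal.comp hc
    · apply Complex.continuous_exp.comp
      apply continuous_const.mul
      exact Complex.continuous_ofReal.comp (by fun_prop)
  have hline : (∫ s : ℝ, (χ s : ℂ) * Complex.exp (Complex.I * (a * s - b * s ^ 2)))
      = ∫ s in (1/2 : ℝ)..2, F s := by
    have h1 : (∫ s : ℝ, (χ s : ℂ) * Complex.exp (Complex.I * (a * s - b * s ^ 2)))
        = ∫ s : ℝ, F s := by
      apply MeasureTheory.integral_congr_ae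
      filter_upwards with s
      simp only [Fdef]
      push_cast
      ring_nf
    have h2 : (∫ s : ℝ, F s) = ∫ s in Set.Icc (1/2 : ℝ) 2, F s := by
      symm
      apply MeasureTheory.setIntegral_eq_integral_of_forall_compl_eq_zero
      intro x hx
      have hχ0 : χ x = 0 := by
        by_contra hne
        exact hx (hsupp (Function.mem_support.mpr hne))
      simp [Fdef, hχ0]
    rw [h1, h2, MeasureTheory.integral_Icc_eq_integral_Ioc,
      ← intervalIntegral.integral_of_le (by norm_num : (1/2 : ℝ) ≤ 2)]
  constructor
  · -- non-stationary case
    intro hba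
    rw [hline]
    by_cases h1 : |a| ≤ 1
    · have htr := vdcq_triv a b χ hχ1 (by norm_num : (1/2:ℝ) ≤ 2)
      have hrw := vdcq_rpow |a| (abs_nonneg a)
      have hsle : Real.sqrt (1 + |a|) ≤ 2 := by
        calc Real.sqrt (1 + |a|) ≤ Real.sqrt (2^2) := Real.sqrt_le_sqrt (by nlinarith)
          _ = 2 := Real.sqrt_sq (by norm_num)
      have hsp : 0 < Real.sqrt (1 + |a|) := Real.sqrt_pos.mpr (by positivity)
      have hinv : (1/2 : ℝ) ≤ (Real.sqrt (1 + |a|))⁻¹ := by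
        simpa [one_div] using one_div_le_one_div_of_le hsp hsle
      rw [hrw]
      calc ‖∫ s in (1/2:ℝ)..2, F s‖ ≤ 2 - 1/2 := htr
        _ ≤ 100 * (Real.sqrt (1 + |a|))⁻¹ := by nlinarith
    · push_neg at h1
      have hapos : 0 < |a| := by linarith
      have key := ibp_bound a b (1/2) 2 (|a|/2) χ hχ hχb (by norm_num) (by linarith) ?_
      · have hrw := vdcq_rpow |a| (abs_nonneg a)
        rw [hrw]
        have hs : Real.sqrt (1 + |a|) ≤ 2 * |a| := by
          calc Real.sqrt (1 + |a|) ≤ Real.sqrt ((2*|a|)^2) := Real.sqrt_le_sqrt (by nlinarith)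
            _ = 2 * |a| := Real.sqrt_sq (by positivity)
        have hsp : 0 < Real.sqrt (1 + |a|) := Real.sqrt_pos.mpr (by positivity)
        have hineq : (4 + (2 - 1/2 : ℝ))/(|a|/2) ≤ 100 * (Real.sqrt (1 + |a|))⁻¹ := by
          have heq : (4 + (2 - 1/2 : ℝ))/(|a|/2) = 11/|a| := by ring
          rw [heq, inv_eq_one_div, mul_one_div, div_le_div_iff₀ hapos hsp]
          linarith [hs, hapos]
        exact key.trans hineq
      · intro s hs
        obtain ⟨hs1, hs2⟩ := hs
        have hsabs : |2*b*s| ≤ 4 * |b| := by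
          have h2 : |s| ≤ 2 := abs_le.mpr ⟨by linarith, hs2⟩
          have h3 : |2*b*s| = 2 * |b| * |s| := by
            rw [abs_mul, abs_mul]
            norm_num
          rw [h3]
          nlinarith [abs_nonneg b, h2]
        have := abs_sub_abs_le_abs_sub a (2*b*s)
        linarith
  · -- stationary case
    intro hb1
    rw [hline]
    have hbne : b ≠ 0 := fun h => by simp [h] at hb1; linarith
    have hbpos : 0 < |b| := abs_pos.mpr hbne
    have hsq1 : (1:ℝ) ≤ Real.sqrt |b| := by
      calc (1:ℝ) = Real.sqrt 1 := Real.sqrt_one.symm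
        _ ≤ Real.sqrt |b| := Real.sqrt_le_sqrt hb1
    have hsqpos : 0 < Real.sqrt |b| := by linarith
    set δ : ℝ := (Real.sqrt |b|)⁻¹ with δdef
    have hδpos : 0 < δ := by positivity
    have hδ1 : δ ≤ 1 := by
      rw [δdef]
      rw [inv_le_one_iff₀]
      right; exact hsq1
    have hbδ : |b| * δ = Real.sqrt |b| := by
      rw [δdef, inv_eq_one_div, mul_one_div, div_eq_iff (ne_of_gt hsqpos)]
      exact (Real.mul_self_sqrt hbpos.le).symm
    set s0 : ℝ := a/(2*b) with s0def
    have hψfact : ∀ s : ℝ, a - 2*b*s = 2*b*(s0 - s) := by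
      intro s; rw [s0def]; field_simp
    set β1 : ℝ := min 2 (max (1/2) (s0 - δ)) with β1def
    set α2 : ℝ := min 2 (max (1/2) (s0 + δ)) with α2def
    have hβ1lb : (1/2:ℝ) ≤ β1 := le_min (by norm_num) (le_max_left _ _)
    have hβ1ub : β1 ≤ 2 := min_le_left _ _
    have hα2lb : (1/2:ℝ) ≤ α2 := le_min (by norm_num) (le_max_left _ _)
    have hα2ub : α2 ≤ 2 := min_le_left _ _
    have hβα : β1 ≤ α2 := by
      apply min_le_min le_rfl
      apply max_le_max le_rfl
      linarith
    have hdiff : α2 - β1 ≤ 2*δ := by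
      have h1 : max (1/2:ℝ) (s0+δ) ≤ max (1/2:ℝ) (s0-δ) + 2*δ := by
        apply max_le
        · have := le_max_left (1/2:ℝ) (s0-δ); linarith
        · have := le_max_right (1/2:ℝ) (s0-δ); linarith
      have h2 : α2 ≤ β1 + 2*δ := by
        rw [α2def, β1def]
        rcases le_total (max (1/2:ℝ) (s0-δ)) 2 with h|h
        · rw [min_eq_right h]
          exact (min_le_right _ _).trans h1
        · rw [min_eq_left h]
          have := min_le_left (2:ℝ) (max (1/2:ℝ) (s0+δ))
          linarith
      linarith
    -- interval integrability of F
    have hint : ∀ x y : ℝ, IntervalIntegrable F volume x y := fun x y =>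
      hFc.intervalIntegrable x y
    have hsplit : (∫ s in (1/2:ℝ)..2, F s)
        = (∫ s in (1/2:ℝ)..β1, F s) + (∫ s in β1..α2, F s) + (∫ s in α2..(2:ℝ), F s) := by
      rw [intervalIntegral.integral_add_adjacent_intervals (hint _ _) (hint _ _),
        intervalIntegral.integral_add_adjacent_intervals (hint _ _) (hint _ _)]
    -- piece bounds
    have hm : (0:ℝ) < 2 * Real.sqrt |b| := by positivity
    have piece1 : ‖∫ s in (1/2:ℝ)..β1, F s‖ ≤ 3 / Real.sqrt |b| := by
      by_cases hc : (1/2:ℝ) < β1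
      · have hmax : (1/2:ℝ) < max (1/2) (s0 - δ) := lt_of_lt_of_le hc (min_le_right _ _)
        have hs0δ : (1/2:ℝ) < s0 - δ := by
          by_contra hcon
          push_neg at hcon
          rw [max_eq_left hcon] at hmax
          exact lt_irrefl _ hmax
        have hβ1le : β1 ≤ s0 - δ := by
          rw [β1def, max_eq_right hs0δ.le]
          exact min_le_right _ _
        have key := ibp_bound a b (1/2) β1 (2 * Real.sqrt |b|) χ hχ hχb hc.le hm ?_
        · calc ‖∫ s in (1/2:ℝ)..β1, F s‖ ≤ (4 + (β1 - 1/2))/(2 * Real.sqrt |b|) := key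
            _ ≤ 6/(2 * Real.sqrt |b|) := by
                gcongr
                linarith [hβ1ub]
            _ = 3 / Real.sqrt |b| := by ring
        · intro s hs
          obtain ⟨hs1, hs2⟩ := hs
          have hss : δ ≤ s0 - s := by linarith [hβ1le]
          rw [hψfact s, abs_mul, abs_mul]
          have h2 : |(2:ℝ)| = 2 := by norm_num
          have h3 : |s0 - s| = s0 - s := abs_of_nonneg (by linarith)
          rw [h2, h3]
          calc 2 * Real.sqrt |b| = 2 * (|b| * δ) := by rw [hbδ]
            _ ≤ 2 * (|b| * (s0 - s)) := by nlinarith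
            _ = 2 * |b| * (s0 - s) := by ring
      · push_neg at hc
        have : β1 = 1/2 := le_antisymm hc hβ1lb
        rw [this]
        simp
        positivity
    have piece3 : ‖∫ s in α2..(2:ℝ), F s‖ ≤ 3 / Real.sqrt |b| := by
      by_cases hc : α2 < 2
      · have hα2ge : s0 + δ ≤ α2 := by
          have hmax : min 2 (max (1/2) (s0 + δ)) < 2 := hc
          have h4 : max (1/2) (s0 + δ) < 2 := by
            by_contra hcon
            push_neg at hcon
            rw [min_eq_left hcon] at hmax
            exact lt_irrefl _ hmax
          rw [α2def, min_eq_right h4.le]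
          exact le_max_right _ _
        have key := ibp_bound a b α2 2 (2 * Real.sqrt |b|) χ hχ hχb hc.le hm ?_
        · calc ‖∫ s in α2..(2:ℝ), F s‖ ≤ (4 + (2 - α2))/(2 * Real.sqrt |b|) := key
            _ ≤ 6/(2 * Real.sqrt |b|) := by
                gcongr
                linarith [hα2lb]
            _ = 3 / Real.sqrt |b| := by ring
        · intro s hs
          obtain ⟨hs1, hs2⟩ := hs
          have hss : δ ≤ s - s0 := by linarith [hα2ge]
          rw [hψfact s, abs_mul, abs_mul]
          have h2 : |(2:ℝ)| = 2 := by norm_num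
          have h3 : |s0 - s| = s - s0 := by rw [abs_sub_comm]; exact abs_of_nonneg (by linarith)
          rw [h2, h3]
          calc 2 * Real.sqrt |b| = 2 * (|b| * δ) := by rw [hbδ]
            _ ≤ 2 * (|b| * (s - s0)) := by nlinarith
            _ = 2 * |b| * (s - s0) := by ring
      · push_neg at hc
        have : α2 = 2 := le_antisymm hα2ub hc
        rw [this]
        simp
        positivity
    have piece2 : ‖∫ s in β1..α2, F s‖ ≤ 2 / Real.sqrt |b| := by
      calc ‖∫ s in β1..α2, F s‖ ≤ α2 - β1 := vdcq_triv a b χ hχ1 hβα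
        _ ≤ 2*δ := hdiff
        _ = 2 / Real.sqrt |b| := by rw [δdef]; ring
    -- combine
    have htotal : ‖∫ s in (1/2:ℝ)..2, F s‖ ≤ 8 / Real.sqrt |b| := by
      rw [hsplit]
      calc ‖(∫ s in (1/2:ℝ)..β1, F s) + (∫ s in β1..α2, F s) + (∫ s in α2..(2:ℝ), F s)‖
          ≤ ‖(∫ s in (1/2:ℝ)..β1, F s) + (∫ s in β1..α2, F s)‖ + ‖∫ s in α2..(2:ℝ), F s‖ :=
            norm_add_le _ _
        _ ≤ ‖∫ s in (1/2:ℝ)..β1, F s‖ + ‖∫ s in β1..α2, F s‖ + ‖∫ s in α2..(2:ℝ), F s‖ := by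
            have := norm_add_le (∫ s in (1/2:ℝ)..β1, F s) (∫ s in β1..α2, F s); linarith
        _ ≤ 3 / Real.sqrt |b| + 2 / Real.sqrt |b| + 3 / Real.sqrt |b| := by
            linarith [piece1, piece2, piece3]
        _ = 8 / Real.sqrt |b| := by ring
    have hrw := vdcq_rpow |b| (abs_nonneg b)
    rw [hrw]
    have hs : Real.sqrt (1 + |b|) ≤ 2 * Real.sqrt |b| := by
      calc Real.sqrt (1 + |b|) ≤ Real.sqrt (4 * |b|) := Real.sqrt_le_sqrt (by linarith)
        _ = Real.sqrt ((2:ℝ)^2 * |b|) := by norm_num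
        _ = 2 * Real.sqrt |b| := by
            rw [Real.sqrt_mul (by positivity), Real.sqrt_sq (by norm_num)]
    have hsp : 0 < Real.sqrt (1 + |b|) := Real.sqrt_pos.mpr (by positivity)
    calc ‖∫ s in (1/2:ℝ)..2, F s‖ ≤ 8 / Real.sqrt |b| := htotal
      _ ≤ 100 * (Real.sqrt (1 + |b|))⁻¹ := by
          rw [inv_eq_one_div, mul_one_div, div_le_div_iff₀ hsqpos hsp]
          linarith [hs, hsqpos]
end

section
/- Schur-type bound used in the TT* argument: define, for a measurable kernel K on [1,∞)² satisfying |K(x,x')| ≤ 1 when x ∼ x' (i.e. 1/2 ≤ x/x' ≤ 2), |K(x,x')| ≤ x^{-1/2} when x > 2x', and |K(x,x')| ≤ x'^{-1/2} when x' > 2x, the operator (Tf)(x) = ∫_1^∞ K(x,x') x^{-1/2} x'^{-1/2} f(x') dx'. Then T is bounded on L²([1,∞)) with operator norm bounded by an absolute constant. -/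
open MeasureTheory Real Set
open scoped ENNReal


noncomputable def schurBB (x x' : ℝ) : ℝ :=
  2 * (max x x') ^ (-(3/4) : ℝ) * (min x x') ^ (-(1/4) : ℝ)

lemma schurBB_symm (x x' : ℝ) : schurBB x x' = schurBB x' x := by
  simp [schurBB, max_comm, min_comm]

lemma schurBB_nonneg {x x' : ℝ} (hx : 1 ≤ x) (hx' : 1 ≤ x') : 0 ≤ schurBB x x' := by
  have h1 : (0:ℝ) ≤ max x x' := le_trans zero_le_one (le_max_of_le_left hx)
  have h2 : (0:ℝ) ≤ min x x' := le_min (by linarith) (by linarith)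
  have := Real.rpow_nonneg h1 (-(3/4) : ℝ)
  have := Real.rpow_nonneg h2 (-(1/4) : ℝ)
  unfold schurBB; positivity

lemma schur_diag_le {x x' : ℝ} (hx : 1 ≤ x) (hx' : 1 ≤ x') (hord : x ≤ x') (h : x' ≤ 2 * x) :
    x ^ (-(1/2) : ℝ) * x' ^ (-(1/2) : ℝ) ≤ schurBB x x' := by
  have hx0 : (0:ℝ) < x := by linarith
  have hx'0 : (0:ℝ) < x' := by linarith
  have e1 : x' ^ (-(1/2) : ℝ) = x' ^ (-(3/4) : ℝ) * x' ^ ((1/4) : ℝ) := by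
    rw [← Real.rpow_add hx'0]; norm_num
  have e2 : x ^ (-(1/2) : ℝ) * x ^ ((1/4) : ℝ) = x ^ (-(1/4) : ℝ) := by
    rw [← Real.rpow_add hx0]; norm_num
  have h14 : x' ^ ((1/4):ℝ) ≤ 2 * x ^ ((1/4):ℝ) := by
    have h1 : x' ^ ((1/4):ℝ) ≤ (2*x) ^ ((1/4):ℝ) :=
      Real.rpow_le_rpow hx'0.le h (by norm_num)
    have h2 : ((2:ℝ)*x) ^ ((1/4):ℝ) = (2:ℝ)^((1/4):ℝ) * x ^ ((1/4):ℝ) :=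
      Real.mul_rpow (by norm_num) hx0.le
    have h3 : (2:ℝ)^((1/4):ℝ) ≤ 2 := by
      calc (2:ℝ)^((1/4):ℝ) ≤ (2:ℝ)^((1:ℝ)) :=
            Real.rpow_le_rpow_of_exponent_le one_le_two (by norm_num)
        _ = 2 := Real.rpow_one 2
    calc x' ^ ((1/4):ℝ) ≤ (2:ℝ)^((1/4):ℝ) * x ^ ((1/4):ℝ) := by rw [← h2]; exact h1
      _ ≤ 2 * x ^ ((1/4):ℝ) := mul_le_mul_of_nonneg_right h3 (Real.rpow_nonneg hx0.le _)
  have hbb : schurBB x x' = 2 * x' ^ (-(3/4):ℝ) * x ^ (-(1/4):ℝ) := by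
    rw [schurBB, max_eq_right hord, min_eq_left hord]
  rw [hbb, e1]
  calc x ^ (-(1/2):ℝ) * (x' ^ (-(3/4):ℝ) * x' ^ ((1/4):ℝ))
      ≤ x ^ (-(1/2):ℝ) * (x' ^ (-(3/4):ℝ) * (2 * x ^ ((1/4):ℝ))) := by
        refine mul_le_mul_of_nonneg_left ?_ (Real.rpow_nonneg hx0.le _)
        exact mul_le_mul_of_nonneg_left h14 (Real.rpow_nonneg hx'0.le _)
    _ = 2 * x' ^ (-(3/4):ℝ) * (x ^ (-(1/2):ℝ) * x ^ ((1/4):ℝ)) := by ring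
    _ = 2 * x' ^ (-(3/4):ℝ) * x ^ (-(1/4):ℝ) := by rw [e2]

lemma schur_off_le {x x' : ℝ} (hx : 1 ≤ x) (hx' : 1 ≤ x') (hord : x' ≤ x) :
    x ^ (-(1:ℝ)) * x' ^ (-(1/2) : ℝ) ≤ schurBB x x' := by
  have hbb : schurBB x x' = 2 * x ^ (-(3/4):ℝ) * x' ^ (-(1/4):ℝ) := by
    rw [schurBB, max_eq_left hord, min_eq_right hord]
  have h1 : x ^ (-(1:ℝ)) ≤ x ^ (-(3/4):ℝ) :=
    Real.rpow_le_rpow_of_exponent_le hx (by norm_num)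
  have h2 : x' ^ (-(1/2):ℝ) ≤ x' ^ (-(1/4):ℝ) :=
    Real.rpow_le_rpow_of_exponent_le hx' (by norm_num)
  have hn1 : (0:ℝ) ≤ x ^ (-(1:ℝ)) := Real.rpow_nonneg (by linarith) _
  have hn2 : (0:ℝ) ≤ x' ^ (-(1/4):ℝ) := Real.rpow_nonneg (by linarith) _
  have hn3 : (0:ℝ) ≤ x ^ (-(3/4):ℝ) := Real.rpow_nonneg (by linarith) _
  have key : x ^ (-(1:ℝ)) * x' ^ (-(1/2) : ℝ) ≤ x ^ (-(3/4):ℝ) * x' ^ (-(1/4):ℝ) :=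
    mul_le_mul h1 h2 (Real.rpow_nonneg (by linarith) _) hn3
  rw [hbb]
  nlinarith [mul_nonneg hn3 hn2]

lemma schur_cpow_norm {x : ℝ} (hx0 : 0 < x) :
    ‖(x:ℂ) ^ (-(1/2) : ℂ)‖ = x ^ (-(1/2) : ℝ) := by
  have h : (-(1/2) : ℂ) = ((-(1/2) : ℝ) : ℂ) := by norm_num
  rw [h, Complex.norm_cpow_eq_rpow_re_of_pos hx0, Complex.ofReal_re]

lemma schur_kernel_norm_le (K : ℝ → ℝ → ℂ)
    (hK1 : ∀ x x' : ℝ, 1 ≤ x → 1 ≤ x' → 1/2 ≤ x / x' → x / x' ≤ 2 → ‖K x x'‖ ≤ 1)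
    (hK2 : ∀ x x' : ℝ, 1 ≤ x → 1 ≤ x' → x > 2 * x' → ‖K x x'‖ ≤ x ^ (-(1/2) : ℝ))
    (hK3 : ∀ x x' : ℝ, 1 ≤ x → 1 ≤ x' → x' > 2 * x → ‖K x x'‖ ≤ x' ^ (-(1/2) : ℝ))
    {x x' : ℝ} (hx : 1 ≤ x) (hx' : 1 ≤ x') :
    ‖K x x' * (x : ℂ) ^ (-(1/2) : ℂ) * (x' : ℂ) ^ (-(1/2) : ℂ)‖ ≤ schurBB x x' := by
  have hx0 : (0:ℝ) < x := by linarith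
  have hx'0 : (0:ℝ) < x' := by linarith
  have hxr : (0:ℝ) ≤ x ^ (-(1/2) : ℝ) := Real.rpow_nonneg hx0.le _
  have hx'r : (0:ℝ) ≤ x' ^ (-(1/2) : ℝ) := Real.rpow_nonneg hx'0.le _
  rw [norm_mul, norm_mul, schur_cpow_norm hx0, schur_cpow_norm hx'0]
  rcases lt_or_ge (2 * x') x with hgt | hle1
  · -- x > 2x'
    have hKb := hK2 x x' hx hx' hgt
    have hord : x' ≤ x := by linarith
    calc ‖K x x'‖ * x ^ (-(1/2):ℝ) * x' ^ (-(1/2):ℝ)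
        ≤ x ^ (-(1/2):ℝ) * x ^ (-(1/2):ℝ) * x' ^ (-(1/2):ℝ) := by
          exact mul_le_mul_of_nonneg_right (mul_le_mul_of_nonneg_right hKb hxr) hx'r
      _ = x ^ (-(1:ℝ)) * x' ^ (-(1/2):ℝ) := by
          rw [← Real.rpow_add hx0]; norm_num
      _ ≤ schurBB x x' := schur_off_le hx hx' hord
  · rcases lt_or_ge (2 * x) x' with hgt' | hle2
    · -- x' > 2x
      have hKb := hK3 x x' hx hx' hgt'
      have hord : x ≤ x' := by linarith
      calc ‖K x x'‖ * x ^ (-(1/2):ℝ) * x' ^ (-(1/2):ℝ)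
          ≤ x' ^ (-(1/2):ℝ) * x ^ (-(1/2):ℝ) * x' ^ (-(1/2):ℝ) := by
            exact mul_le_mul_of_nonneg_right (mul_le_mul_of_nonneg_right hKb hxr) hx'r
        _ = x' ^ (-(1:ℝ)) * x ^ (-(1/2):ℝ) := by
            rw [show x' ^ (-(1/2):ℝ) * x ^ (-(1/2):ℝ) * x' ^ (-(1/2):ℝ)
                = x' ^ (-(1/2):ℝ) * x' ^ (-(1/2):ℝ) * x ^ (-(1/2):ℝ) by ring,
              ← Real.rpow_add hx'0]
            norm_num
        _ ≤ schurBB x' x := schur_off_le hx' hx hord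
        _ = schurBB x x' := (schurBB_symm x x').symm
    · -- diagonal
      have hd1 : 1/2 ≤ x / x' := by rw [le_div_iff₀ hx'0]; linarith
      have hd2 : x / x' ≤ 2 := by rw [div_le_iff₀ hx'0]; linarith
      have hKb := hK1 x x' hx hx' hd1 hd2
      have step : ‖K x x'‖ * x ^ (-(1/2):ℝ) * x' ^ (-(1/2):ℝ)
          ≤ x ^ (-(1/2):ℝ) * x' ^ (-(1/2):ℝ) := by
        have := mul_le_mul_of_nonneg_right (mul_le_mul_of_nonneg_right hKb hxr) hx'r
        simpa using this
      refine le_trans step ?_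
      rcases le_total x x' with hord | hord
      · exact schur_diag_le hx hx' hord hle2
      · calc x ^ (-(1/2):ℝ) * x' ^ (-(1/2):ℝ) = x' ^ (-(1/2):ℝ) * x ^ (-(1/2):ℝ) := by ring
          _ ≤ schurBB x' x := schur_diag_le hx' hx hord hle1
          _ = schurBB x x' := (schurBB_symm x x').symm

lemma schur_row_bound {x : ℝ} (hx : 1 ≤ x) :
    ∫⁻ x' in Ici (1:ℝ), ENNReal.ofReal (schurBB x x' * x' ^ (-(1/2):ℝ)) ≤
      ENNReal.ofReal 16 * ENNReal.ofReal (x ^ (-(1/2):ℝ)) := by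
  have hx0 : (0:ℝ) < x := by linarith
  have hdisj : Disjoint (Icc (1:ℝ) x) (Ioi x) :=
    (Set.Iic_disjoint_Ioi le_rfl).mono_left Set.Icc_subset_Iic_self
  rw [← Set.Icc_union_Ioi_eq_Ici hx, lintegral_union measurableSet_Ioi hdisj]
  have part1 : ∫⁻ x' in Icc (1:ℝ) x, ENNReal.ofReal (schurBB x x' * x' ^ (-(1/2):ℝ)) ≤
      ENNReal.ofReal (8 * x ^ (-(1/2):ℝ)) := by
    have hcongr : ∫⁻ x' in Icc (1:ℝ) x, ENNReal.ofReal (schurBB x x' * x' ^ (-(1/2):ℝ))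
        = ∫⁻ x' in Icc (1:ℝ) x,
            ENNReal.ofReal ((2 * x ^ (-(3/4):ℝ)) * x' ^ (-(3/4):ℝ)) := by
      refine setLIntegral_congr_fun measurableSet_Icc (fun x' hx' => ?_)
      have hx'0 : (0:ℝ) < x' := by linarith [hx'.1]
      congr 1
      rw [schurBB, max_eq_left hx'.2, min_eq_right hx'.2,
        mul_assoc (2 * x ^ (-(3/4):ℝ)), ← Real.rpow_add hx'0]
      norm_num
    rw [hcongr]
    have h2a : (0:ℝ) ≤ 2 * x ^ (-(3/4):ℝ) := by positivity
    simp_rw [ENNReal.ofReal_mul h2a]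
    rw [lintegral_const_mul' _ _ ENNReal.ofReal_ne_top]
    have hint : IntegrableOn (fun x' : ℝ => x' ^ (-(3/4):ℝ)) (Icc 1 x) volume := by
      apply ContinuousOn.integrableOn_compact isCompact_Icc
      exact ContinuousOn.rpow_const continuousOn_id
        (fun x' hx' => Or.inl (by intro h; rw [h] at hx'; linarith [hx'.1]))
    have hnn : 0 ≤ᵐ[volume.restrict (Icc (1:ℝ) x)] fun x' : ℝ => x' ^ (-(3/4):ℝ) :=
      (ae_restrict_iff' measurableSet_Icc).2
        (ae_of_all _ fun x' hx' => Real.rpow_nonneg (by linarith [hx'.1]) _)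
    have hbound : ∫⁻ x' in Icc (1:ℝ) x, ENNReal.ofReal (x' ^ (-(3/4):ℝ)) ≤
        ENNReal.ofReal (4 * x ^ ((1/4):ℝ)) := by
      rw [← ofReal_integral_eq_lintegral_ofReal hint hnn]
      apply ENNReal.ofReal_le_ofReal
      rw [MeasureTheory.integral_Icc_eq_integral_Ioc,
        ← intervalIntegral.integral_of_le hx, integral_rpow (Or.inl (by norm_num))]
      have hx14 : (1:ℝ) ≤ x ^ ((1/4):ℝ) := by
        calc (1:ℝ) = (1:ℝ) ^ ((1/4):ℝ) := (Real.one_rpow _).symm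
          _ ≤ x ^ ((1/4):ℝ) := Real.rpow_le_rpow zero_le_one hx (by norm_num)
      norm_num
      linarith
    calc ENNReal.ofReal (2 * x ^ (-(3/4):ℝ)) *
          ∫⁻ x' in Icc (1:ℝ) x, ENNReal.ofReal (x' ^ (-(3/4):ℝ))
        ≤ ENNReal.ofReal (2 * x ^ (-(3/4):ℝ)) * ENNReal.ofReal (4 * x ^ ((1/4):ℝ)) :=
          mul_le_mul_right hbound _
      _ = ENNReal.ofReal (8 * x ^ (-(1/2):ℝ)) := by
          rw [← ENNReal.ofReal_mul h2a]
          congr 1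
          rw [show 2 * x ^ (-(3/4):ℝ) * (4 * x ^ ((1/4):ℝ))
              = 8 * (x ^ (-(3/4):ℝ) * x ^ ((1/4):ℝ)) by ring, ← Real.rpow_add hx0]
          norm_num
  have part2 : ∫⁻ x' in Ioi x, ENNReal.ofReal (schurBB x x' * x' ^ (-(1/2):ℝ)) ≤
      ENNReal.ofReal (8 * x ^ (-(1/2):ℝ)) := by
    have hcongr : ∫⁻ x' in Ioi x, ENNReal.ofReal (schurBB x x' * x' ^ (-(1/2):ℝ))
        = ∫⁻ x' in Ioi x,
            ENNReal.ofReal ((2 * x ^ (-(1/4):ℝ)) * x' ^ (-(5/4):ℝ)) := by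
      refine setLIntegral_congr_fun measurableSet_Ioi (fun x' hx' => ?_)
      have hlt : x ≤ x' := le_of_lt hx'
      have hx'0 : (0:ℝ) < x' := lt_trans hx0 hx'
      congr 1
      rw [schurBB, max_eq_right hlt, min_eq_left hlt,
        show 2 * x' ^ (-(3/4):ℝ) * x ^ (-(1/4):ℝ) * x' ^ (-(1/2):ℝ)
          = 2 * x ^ (-(1/4):ℝ) * (x' ^ (-(3/4):ℝ) * x' ^ (-(1/2):ℝ)) by ring,
        ← Real.rpow_add hx'0]
      norm_num
    rw [hcongr]
    have h2a : (0:ℝ) ≤ 2 * x ^ (-(1/4):ℝ) := by positivity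
    simp_rw [ENNReal.ofReal_mul h2a]
    rw [lintegral_const_mul' _ _ ENNReal.ofReal_ne_top]
    have hint : IntegrableOn (fun x' : ℝ => x' ^ (-(5/4):ℝ)) (Ioi x) volume :=
      integrableOn_Ioi_rpow_of_lt (by norm_num) hx0
    have hnn : 0 ≤ᵐ[volume.restrict (Ioi x)] fun x' : ℝ => x' ^ (-(5/4):ℝ) :=
      (ae_restrict_iff' measurableSet_Ioi).2
        (ae_of_all _ fun x' hx' => Real.rpow_nonneg (by linarith [mem_Ioi.mp hx']) _)
    have hbound : ∫⁻ x' in Ioi x, ENNReal.ofReal (x' ^ (-(5/4):ℝ)) ≤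
        ENNReal.ofReal (4 * x ^ (-(1/4):ℝ)) := by
      rw [← ofReal_integral_eq_lintegral_ofReal hint hnn]
      apply ENNReal.ofReal_le_ofReal
      rw [integral_Ioi_rpow_of_lt (by norm_num) hx0]
      norm_num
      linarith
    calc ENNReal.ofReal (2 * x ^ (-(1/4):ℝ)) *
          ∫⁻ x' in Ioi x, ENNReal.ofReal (x' ^ (-(5/4):ℝ))
        ≤ ENNReal.ofReal (2 * x ^ (-(1/4):ℝ)) * ENNReal.ofReal (4 * x ^ (-(1/4):ℝ)) :=
          mul_le_mul_right hbound _
      _ = ENNReal.ofReal (8 * x ^ (-(1/2):ℝ)) := by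
          rw [← ENNReal.ofReal_mul h2a]
          congr 1
          rw [show 2 * x ^ (-(1/4):ℝ) * (4 * x ^ (-(1/4):ℝ))
              = 8 * (x ^ (-(1/4):ℝ) * x ^ (-(1/4):ℝ)) by ring, ← Real.rpow_add hx0]
          norm_num
  calc _ ≤ ENNReal.ofReal (8 * x ^ (-(1/2):ℝ)) + ENNReal.ofReal (8 * x ^ (-(1/2):ℝ)) :=
        add_le_add part1 part2
    _ = ENNReal.ofReal 16 * ENNReal.ofReal (x ^ (-(1/2):ℝ)) := by
        rw [← ENNReal.ofReal_add (by positivity) (by positivity),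
          ← ENNReal.ofReal_mul (by norm_num)]
        congr 1
        ring

/-- Schur-type bound for the `TT*` kernel: if `|K(x,x')| ≤ 1` when `1/2 ≤ x/x' ≤ 2`,
`|K(x,x')| ≤ x^{-1/2}` when `x > 2x'` and `|K(x,x')| ≤ x'^{-1/2}` when `x' > 2x`, then
`(Tf)(x) = ∫_1^∞ K(x,x') x^{-1/2} x'^{-1/2} f(x') dx'` is bounded on `L²([1,∞))` with
operator norm bounded by an absolute constant. -/
theorem schur_TTstar_bound :
    ∃ C > (0 : ℝ), ∀ K : ℝ → ℝ → ℂ,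
      Measurable (Function.uncurry K) →
      (∀ x x' : ℝ, 1 ≤ x → 1 ≤ x' → 1/2 ≤ x / x' → x / x' ≤ 2 → ‖K x x'‖ ≤ 1) →
      (∀ x x' : ℝ, 1 ≤ x → 1 ≤ x' → x > 2 * x' → ‖K x x'‖ ≤ x ^ (-(1/2) : ℝ)) →
      (∀ x x' : ℝ, 1 ≤ x → 1 ≤ x' → x' > 2 * x → ‖K x x'‖ ≤ x' ^ (-(1/2) : ℝ)) →
      ∀ f : ℝ → ℂ, MemLp f 2 (volume.restrict (Set.Ici 1)) →
        eLpNorm (fun x => ∫ x' in Set.Ici (1:ℝ),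
            K x x' * (x : ℂ) ^ (-(1/2) : ℂ) * (x' : ℂ) ^ (-(1/2) : ℂ) * f x')
          2 (volume.restrict (Set.Ici 1))
        ≤ ENNReal.ofReal C * eLpNorm f 2 (volume.restrict (Set.Ici 1)) := by
  refine ⟨16, by norm_num, ?_⟩
  intro K hKmeas hK1 hK2 hK3 f hf
  set μ : Measure ℝ := volume.restrict (Set.Ici 1) with hμdef
  set k : ℝ → ℝ → ℝ≥0∞ := fun x x' => ENNReal.ofReal (schurBB x x') with hkdef
  set w : ℝ → ℝ≥0∞ := fun x => ENNReal.ofReal (x ^ (-(1/2):ℝ)) with hwdef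
  set v : ℝ → ℝ≥0∞ := fun x => ENNReal.ofReal (x ^ ((1/2):ℝ)) with hvdef
  set g : ℝ → ℝ≥0∞ := fun x => (‖f x‖₊ : ℝ≥0∞) with hgdef
  set c : ℝ≥0∞ := ENNReal.ofReal 16 with hcdef
  -- measurability
  have hkmeas : Measurable (fun p : ℝ × ℝ => k p.1 p.2) := by
    have m1 : Measurable fun p : ℝ × ℝ => (max p.1 p.2) ^ (-(3/4):ℝ) :=
      (measurable_fst.max measurable_snd).pow_const _
    have m2 : Measurable fun p : ℝ × ℝ => (min p.1 p.2) ^ (-(1/4):ℝ) :=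
      (measurable_fst.min measurable_snd).pow_const _
    exact ((m1.const_mul 2).mul m2).ennreal_ofReal
  have hkx : ∀ x : ℝ, Measurable fun x' => k x x' := fun x =>
    hkmeas.comp (measurable_const.prodMk measurable_id)
  have hwm : Measurable w := (measurable_id.pow_const _).ennreal_ofReal
  have hvm : Measurable v := (measurable_id.pow_const _).ennreal_ofReal
  have hgm : AEMeasurable g μ := hf.1.aemeasurable.enorm
  -- the esq lemma
  have esq : ∀ a : ℝ≥0∞, a ^ (2:ℝ) = a * a := fun a => by
    rw [show (2:ℝ) = ((2:ℕ):ℝ) by norm_num, ENNReal.rpow_natCast, pow_two]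
  -- row bound
  have hA : ∀ x : ℝ, 1 ≤ x → ∫⁻ x', k x x' * w x' ∂μ ≤ c * w x := by
    intro x hx
    have := schur_row_bound hx
    calc ∫⁻ x', k x x' * w x' ∂μ
        = ∫⁻ x' in Set.Ici (1:ℝ), ENNReal.ofReal (schurBB x x' * x' ^ (-(1/2):ℝ)) := by
          rw [hμdef]
          exact setLIntegral_congr_fun measurableSet_Ici (fun x' hx' =>
            (ENNReal.ofReal_mul (schurBB_nonneg hx hx')).symm)
      _ ≤ c * w x := schur_row_bound hx
  -- column bound
  have hAcol : ∀ x' : ℝ, 1 ≤ x' → ∫⁻ x, k x x' * w x ∂μ ≤ c * w x' := by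
    intro x' hx'
    calc ∫⁻ x, k x x' * w x ∂μ
        = ∫⁻ x in Set.Ici (1:ℝ), ENNReal.ofReal (schurBB x' x * x ^ (-(1/2):ℝ)) := by
          rw [hμdef]
          refine setLIntegral_congr_fun measurableSet_Ici (fun x hx => ?_)
          rw [hkdef]
          simp only []
          rw [schurBB_symm x x', ENNReal.ofReal_mul (schurBB_nonneg hx' hx)]
      _ ≤ c * w x' := schur_row_bound hx'
  -- pointwise bound on T
  have hP : ∀ x : ℝ, 1 ≤ x →
      (‖∫ x' in Set.Ici (1:ℝ),
          K x x' * (x : ℂ) ^ (-(1/2) : ℂ) * (x' : ℂ) ^ (-(1/2) : ℂ) * f x'‖₊ : ℝ≥0∞)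
        ≤ ∫⁻ x', k x x' * g x' ∂μ := by
    intro x hx
    refine le_trans (enorm_integral_le_lintegral_enorm _) ?_
    rw [hμdef]
    refine lintegral_mono_ae ((ae_restrict_iff' measurableSet_Ici).2
      (ae_of_all _ fun x' hx' => ?_))
    have hb := schur_kernel_norm_le K hK1 hK2 hK3 hx hx'
    have heq : (‖K x x' * (x:ℂ) ^ (-(1/2):ℂ) * (x':ℂ) ^ (-(1/2):ℂ) * f x'‖₊ : ℝ≥0∞)
        = ENNReal.ofReal (‖K x x' * (x:ℂ) ^ (-(1/2):ℂ) * (x':ℂ) ^ (-(1/2):ℂ)‖) * g x' := by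
      rw [hgdef]
      simp only []
      rw [← enorm_eq_nnnorm, ← enorm_eq_nnnorm (f x'), ← ofReal_norm, ← ofReal_norm (f x'), norm_mul,
        ENNReal.ofReal_mul (norm_nonneg _)]
    exact heq.le.trans (mul_le_mul_left (ENNReal.ofReal_le_ofReal hb) _)
  -- Cauchy-Schwarz
  have hCS : ∀ x : ℝ, 1 ≤ x →
      (∫⁻ x', k x x' * g x' ∂μ) ^ (2:ℝ)
        ≤ (∫⁻ x', k x x' * w x' ∂μ) * (∫⁻ x', k x x' * v x' * (g x' * g x') ∂μ) := by
    intro x hx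
    set u₁ : ℝ → ℝ≥0∞ := fun x' => (k x x' * w x') ^ ((1/2):ℝ) with hu₁def
    set u₂ : ℝ → ℝ≥0∞ := fun x' => (k x x' * v x') ^ ((1/2):ℝ) * g x' with hu₂def
    have hmul : ∀ᵐ x' ∂μ, k x x' * g x' = u₁ x' * u₂ x' := by
      rw [hμdef]
      refine (ae_restrict_iff' measurableSet_Ici).2 (ae_of_all _ fun x' hx' => ?_)
      have hx'0 : (0:ℝ) < x' := by have := Set.mem_Ici.mp hx'; linarith
      have hwv : w x' * v x' = 1 := by
        rw [hwdef, hvdef]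
        simp only []
        rw [← ENNReal.ofReal_mul (Real.rpow_nonneg hx'0.le _), ← Real.rpow_add hx'0]
        norm_num
      rw [hu₁def, hu₂def]
      simp only []
      rw [← mul_assoc, ← ENNReal.mul_rpow_of_nonneg _ _ (by norm_num : (0:ℝ) ≤ 1/2)]
      congr 1
      rw [show k x x' * w x' * (k x x' * v x') = (k x x' * k x x') * (w x' * v x') by ring,
        hwv, mul_one, ← esq (k x x'), ← ENNReal.rpow_mul]
      norm_num
    have hu₁m : AEMeasurable u₁ μ := (((hkx x).mul hwm).pow_const _).aemeasurable
    have hu₂m : AEMeasurable u₂ μ := ((((hkx x).mul hvm).pow_const _).aemeasurable).mul hgm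
    have hconj : Real.HolderConjugate 2 2 := Real.HolderConjugate.two_two
    have hCS' := ENNReal.lintegral_mul_le_Lp_mul_Lq μ hconj hu₁m hu₂m
    have hsq1 : ∫⁻ x', u₁ x' ^ (2:ℝ) ∂μ = ∫⁻ x', k x x' * w x' ∂μ := by
      refine lintegral_congr fun x' => ?_
      rw [hu₁def]
      simp only []
      rw [← ENNReal.rpow_mul]
      norm_num
    have hsq2 : ∫⁻ x', u₂ x' ^ (2:ℝ) ∂μ = ∫⁻ x', k x x' * v x' * (g x' * g x') ∂μ := by
      refine lintegral_congr fun x' => ?_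
      rw [hu₂def]
      simp only []
      rw [ENNReal.mul_rpow_of_nonneg _ _ (by norm_num : (0:ℝ) ≤ 2), ← ENNReal.rpow_mul,
        esq (g x')]
      norm_num
    calc (∫⁻ x', k x x' * g x' ∂μ) ^ (2:ℝ)
        = (∫⁻ x', u₁ x' * u₂ x' ∂μ) ^ (2:ℝ) := by rw [lintegral_congr_ae hmul]
      _ ≤ ((∫⁻ x', u₁ x' ^ (2:ℝ) ∂μ) ^ ((1:ℝ)/2) * (∫⁻ x', u₂ x' ^ (2:ℝ) ∂μ) ^ ((1:ℝ)/2))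
            ^ (2:ℝ) := by
          refine ENNReal.rpow_le_rpow ?_ (by norm_num)
          exact hCS'
      _ = (∫⁻ x', u₁ x' ^ (2:ℝ) ∂μ) * (∫⁻ x', u₂ x' ^ (2:ℝ) ∂μ) := by
          rw [ENNReal.mul_rpow_of_nonneg _ _ (by norm_num : (0:ℝ) ≤ 2),
            ← ENNReal.rpow_mul, ← ENNReal.rpow_mul]
          norm_num
      _ = _ := by rw [hsq1, hsq2]
  -- combine
  set B : ℝ → ℝ≥0∞ := fun x => ∫⁻ x', k x x' * v x' * (g x' * g x') ∂μ with hBdef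
  have step1 : ∫⁻ x, (‖∫ x' in Set.Ici (1:ℝ),
        K x x' * (x : ℂ) ^ (-(1/2) : ℂ) * (x' : ℂ) ^ (-(1/2) : ℂ) * f x'‖₊ : ℝ≥0∞) ^ (2:ℝ) ∂μ
      ≤ c * ∫⁻ x, w x * B x ∂μ := by
    rw [← lintegral_const_mul' _ _ (by rw [hcdef]; exact ENNReal.ofReal_ne_top)]
    rw [hμdef]
    refine lintegral_mono_ae ((ae_restrict_iff' measurableSet_Ici).2
      (ae_of_all _ fun x hx => ?_))
    calc (‖∫ x' in Set.Ici (1:ℝ),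
          K x x' * (x : ℂ) ^ (-(1/2) : ℂ) * (x' : ℂ) ^ (-(1/2) : ℂ) * f x'‖₊ : ℝ≥0∞) ^ (2:ℝ)
        ≤ (∫⁻ x', k x x' * g x' ∂μ) ^ (2:ℝ) :=
          ENNReal.rpow_le_rpow (hP x hx) (by norm_num)
      _ ≤ (∫⁻ x', k x x' * w x' ∂μ) * B x := hCS x hx
      _ ≤ (c * w x) * B x := mul_le_mul_left (hA x hx) _
      _ = c * (w x * B x) := mul_assoc _ _ _
  -- swap
  have hF : AEMeasurable (Function.uncurry fun x x' =>
      w x * (k x x' * v x' * (g x' * g x'))) (μ.prod μ) := by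
    exact ((hwm.comp measurable_fst).aemeasurable).mul
      (((hkmeas.mul (hvm.comp measurable_snd)).aemeasurable).mul (hgm.comp_snd.mul hgm.comp_snd))
  have hswap : ∫⁻ x, w x * B x ∂μ
      = ∫⁻ x', (v x' * (g x' * g x')) * ∫⁻ x, k x x' * w x ∂μ ∂μ := by
    have h1 : ∀ x : ℝ, w x * B x = ∫⁻ x', w x * (k x x' * v x' * (g x' * g x')) ∂μ :=
      fun x => (lintegral_const_mul' _ _ (by rw [hwdef]; exact ENNReal.ofReal_ne_top)).symm
    calc ∫⁻ x, w x * B x ∂μ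
        = ∫⁻ x, ∫⁻ x', w x * (k x x' * v x' * (g x' * g x')) ∂μ ∂μ :=
          lintegral_congr fun x => h1 x
      _ = ∫⁻ x', ∫⁻ x, w x * (k x x' * v x' * (g x' * g x')) ∂μ ∂μ :=
          lintegral_lintegral_swap hF
      _ = ∫⁻ x', (v x' * (g x' * g x')) * ∫⁻ x, k x x' * w x ∂μ ∂μ := by
          refine lintegral_congr fun x' => ?_
          have hcne : v x' * (g x' * g x') ≠ ∞ :=
            ENNReal.mul_ne_top (by rw [hvdef]; exact ENNReal.ofReal_ne_top)
              (ENNReal.mul_ne_top ENNReal.coe_ne_top ENNReal.coe_ne_top)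
          calc ∫⁻ x, w x * (k x x' * v x' * (g x' * g x')) ∂μ
              = ∫⁻ x, (v x' * (g x' * g x')) * (k x x' * w x) ∂μ :=
                lintegral_congr fun x => by ring
            _ = (v x' * (g x' * g x')) * ∫⁻ x, k x x' * w x ∂μ :=
                lintegral_const_mul' _ _ hcne
  -- column estimate
  have step2 : ∫⁻ x', (v x' * (g x' * g x')) * ∫⁻ x, k x x' * w x ∂μ ∂μ
      ≤ c * ∫⁻ x', g x' * g x' ∂μ := by
    rw [← lintegral_const_mul' _ _ (by rw [hcdef]; exact ENNReal.ofReal_ne_top)]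
    rw [hμdef]
    refine lintegral_mono_ae ((ae_restrict_iff' measurableSet_Ici).2
      (ae_of_all _ fun x' hx' => ?_))
    have hx'0 : (0:ℝ) < x' := by have := Set.mem_Ici.mp hx'; linarith
    have hvw : v x' * w x' = 1 := by
      rw [hwdef, hvdef]
      simp only []
      rw [← ENNReal.ofReal_mul (Real.rpow_nonneg hx'0.le _), ← Real.rpow_add hx'0]
      norm_num
    calc (v x' * (g x' * g x')) * ∫⁻ x, k x x' * w x ∂μ
        ≤ (v x' * (g x' * g x')) * (c * w x') := mul_le_mul_right (hAcol x' hx') _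
      _ = c * ((g x' * g x') * (v x' * w x')) := by ring
      _ = c * (g x' * g x') := by rw [hvw, mul_one]
  -- finish
  have hfinal : ∫⁻ x, (‖∫ x' in Set.Ici (1:ℝ),
        K x x' * (x : ℂ) ^ (-(1/2) : ℂ) * (x' : ℂ) ^ (-(1/2) : ℂ) * f x'‖₊ : ℝ≥0∞) ^ (2:ℝ) ∂μ
      ≤ (c * c) * ∫⁻ x', g x' * g x' ∂μ := by
    calc _ ≤ c * ∫⁻ x, w x * B x ∂μ := step1
      _ = c * ∫⁻ x', (v x' * (g x' * g x')) * ∫⁻ x, k x x' * w x ∂μ ∂μ := by rw [hswap]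
      _ ≤ c * (c * ∫⁻ x', g x' * g x' ∂μ) := mul_le_mul_right step2 _
      _ = (c * c) * ∫⁻ x', g x' * g x' ∂μ := by ring
  have hp2 : ((2:ℝ≥0∞)).toReal = 2 := by norm_num
  rw [eLpNorm_eq_lintegral_rpow_enorm_toReal (by norm_num) (by norm_num),
    eLpNorm_eq_lintegral_rpow_enorm_toReal (by norm_num) (by norm_num), hp2]
  have hgg : ∫⁻ x, (‖f x‖₊ : ℝ≥0∞) ^ (2:ℝ) ∂μ = ∫⁻ x', g x' * g x' ∂μ :=
    lintegral_congr fun x => by rw [esq]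
  calc (∫⁻ x, (‖∫ x' in Set.Ici (1:ℝ),
          K x x' * (x : ℂ) ^ (-(1/2) : ℂ) * (x' : ℂ) ^ (-(1/2) : ℂ) * f x'‖₊ : ℝ≥0∞)
            ^ (2:ℝ) ∂μ) ^ (1/2:ℝ)
      ≤ ((c * c) * ∫⁻ x', g x' * g x' ∂μ) ^ (1/2:ℝ) :=
        ENNReal.rpow_le_rpow hfinal (by norm_num)
    _ = c * (∫⁻ x', g x' * g x' ∂μ) ^ (1/2:ℝ) := by
        rw [ENNReal.mul_rpow_of_nonneg _ _ (by norm_num : (0:ℝ) ≤ 1/2), ← esq c,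
          ← ENNReal.rpow_mul]
        norm_num
    _ = ENNReal.ofReal 16 * (∫⁻ x, (‖f x‖₊ : ℝ≥0∞) ^ (2:ℝ) ∂μ) ^ (1/2:ℝ) := by
        rw [hgg, hcdef]
end
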